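/- arXiv:1105.3413 — 3 statements merged into one kernel-verified Lean document; each statement's English description precedes it below -/
import Mathlib

section
/- Let K be a compact Hausdorff space and H a universally measurable subset of K, and define f̃ : M¹(K) → ℝ by f̃(μ) = μ(H). If H is a resolvable subset of K, then f̃ ∈ Hf_1(M¹(K)); if H belongs to the algebra Bos(K) generated by the open subsets of K, then f̃ ∈ Bof_1(M¹(K)). -/
open MeasureTheory Filter Topology Set

noncomputable section

/-- The first uncountable ordinal `ω₁`. -/
def omega1 : Ordinal.{0} := (Cardinal.aleph 1).ord

/-- A subset `A` of a topological space is *resolvable* (an `H`-set) if every nonempty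
subset `B` has a nonempty relatively open piece entirely inside `A` or disjoint from `A`. -/
def Resolvable {X : Type*} [TopologicalSpace X] (A : Set X) : Prop :=
  ∀ B : Set X, B.Nonempty →
    ∃ U : Set X, IsOpen U ∧ (B ∩ U).Nonempty ∧ (B ∩ U ⊆ A ∨ B ∩ U ∩ A = ∅)

/-- The algebra of sets generated by a collection `G`. -/
inductive AlgGen {X : Type*} (G : Set X → Prop) : Set X → Prop
  | basic (s : Set X) : G s → AlgGen G s
  | empty : AlgGen G ∅
  | compl (s : Set X) : AlgGen G s → AlgGen G sᶜ
  | union (s t : Set X) : AlgGen G s → AlgGen G t → AlgGen G (s ∪ t)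

/-- `Bos X` : the algebra of sets generated by the open subsets of `X`. -/
def Bos (X : Type*) [TopologicalSpace X] : Set X → Prop :=
  AlgGen fun s : Set X => IsOpen s

/-- `Hs X` : the algebra of sets generated by the resolvable subsets of `X`. -/
def Hs (X : Type*) [TopologicalSpace X] : Set X → Prop :=
  AlgGen fun s : Set X => Resolvable s

/-- `Σ₂(F)` : countable unions of members of the family `F`. -/
def SigmaTwo {X : Type*} (F : Set X → Prop) (s : Set X) : Prop :=
  ∃ g : ℕ → Set X, (∀ n, F (g n)) ∧ s = ⋃ n, g n

/-- `Σ₂(F)`-measurability of a function: preimages of open sets lie in `Σ₂(F)`. -/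
def SigmaTwoMeasurable {X Y : Type*} [TopologicalSpace Y] (F : Set X → Prop)
    (f : X → Y) : Prop :=
  ∀ U : Set Y, IsOpen U → SigmaTwo F (f ⁻¹' U)

/-- The hierarchy of functions obtained from the class `F0` (put at level `1`) by
iterated pointwise limits of sequences. -/
inductive FunHier {X Y : Type*} [TopologicalSpace Y] (F0 : (X → Y) → Prop) :
    Ordinal.{0} → (X → Y) → Prop
  | base (f : X → Y) : F0 f → FunHier F0 1 f
  | lim (α : Ordinal.{0}) (β : ℕ → Ordinal.{0}) (g : ℕ → X → Y) (f : X → Y) :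
      (∀ n, 1 ≤ β n) → (∀ n, β n < α) → (∀ n, FunHier F0 (β n) (g n)) →
      (∀ x, Tendsto (fun n => g n x) atTop (𝓝 (f x))) → FunHier F0 α f

/-- The classes `Hf_α(X)` of resolvably measurable functions, `1 ≤ α < ω₁`. -/
def HfClass (X : Type*) [TopologicalSpace X] {Y : Type*} [TopologicalSpace Y]
    (α : Ordinal.{0}) (f : X → Y) : Prop :=
  FunHier (SigmaTwoMeasurable (Hs X)) α f

/-- The classes `Bof_α(X)` of Borel measurable functions, `1 ≤ α < ω₁`. -/
def BofClass (X : Type*) [TopologicalSpace X] {Y : Type*} [TopologicalSpace Y]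
    (α : Ordinal.{0}) (f : X → Y) : Prop :=
  FunHier (SigmaTwoMeasurable (Bos X)) α f

/-- The Baire classes: `C_0(X)` consists of the continuous functions and, for `α ≥ 1`,
`C_α(X)` consists of the pointwise limits of sequences of functions of lower classes. -/
inductive BaireClass (X : Type*) [TopologicalSpace X] (Y : Type*) [TopologicalSpace Y] :
    Ordinal.{0} → (X → Y) → Prop
  | base (f : X → Y) : Continuous f → BaireClass X Y 0 f
  | lim (α : Ordinal.{0}) (β : ℕ → Ordinal.{0}) (g : ℕ → X → Y) (f : X → Y) :
      (∀ n, β n < α) → (∀ n, BaireClass X Y (β n) (g n)) →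
      (∀ x, Tendsto (fun n => g n x) atTop (𝓝 (f x))) → BaireClass X Y α f

/-- The space `M¹(K)` of Radon probability measures on `K`, equipped with the weak*
topology (the topology of weak convergence of probability measures). -/
def RadonProb (K : Type*) [TopologicalSpace K] [MeasurableSpace K] [OpensMeasurableSpace K] :
    Type _ :=
  {μ : ProbabilityMeasure K // μ.toMeasure.InnerRegular}

instance (K : Type*) [TopologicalSpace K] [MeasurableSpace K] [OpensMeasurableSpace K] :
    TopologicalSpace (RadonProb K) :=
  inferInstanceAs (TopologicalSpace {μ : ProbabilityMeasure K // μ.toMeasure.InnerRegular})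

/-- The underlying measure of an element of `M¹(K)`. -/
def RadonProb.measure {K : Type*} [TopologicalSpace K] [MeasurableSpace K]
    [OpensMeasurableSpace K] (μ : RadonProb K) : Measure K :=
  (Subtype.val μ : ProbabilityMeasure K).toMeasure

/-- A universally measurable set: measurable with respect to every Radon probability
measure. -/
def UnivMeasurableSet {K : Type*} [TopologicalSpace K] [MeasurableSpace K] (H : Set K) : Prop :=
  ∀ μ : ProbabilityMeasure K, μ.toMeasure.InnerRegular → NullMeasurableSet H μ.toMeasure

/-- A universally measurable function: measurable with respect to every Radon
probability measure. -/
def UnivMeasurableFn {K : Type*} [TopologicalSpace K] [MeasurableSpace K] (f : K → ℝ) : Prop :=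
  ∀ μ : ProbabilityMeasure K, μ.toMeasure.InnerRegular → AEMeasurable f μ.toMeasure

section PartA

variable {X : Type*} {G : Set X → Prop}

lemma AlgGen.inter {s t : Set X} (hs : AlgGen G s) (ht : AlgGen G t) :
    AlgGen G (s ∩ t) := by
  have h : s ∩ t = (sᶜ ∪ tᶜ)ᶜ := by
    rw [compl_union, compl_compl, compl_compl]
  rw [h]
  exact .compl _ (.union _ _ (.compl _ hs) (.compl _ ht))

lemma sigmaTwo_iUnion {ι : Type*} [Countable ι] {t : ι → Set X}
    (ht : ∀ i, AlgGen G (t i)) : SigmaTwo (AlgGen G) (⋃ i, t i) := by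
  rcases isEmpty_or_nonempty ι with h | h
  · refine ⟨fun _ => ∅, fun _ => .empty, ?_⟩
    simp [iUnion_of_empty]
  · have := Encodable.ofCountable ι
    refine ⟨fun n => match Encodable.decode (α := ι) n with
      | some i => t i
      | none => ∅, fun n => ?_, ?_⟩
    · cases h' : Encodable.decode (α := ι) n <;> simp [h']
      · exact .empty
      · exact ht _
    · ext x
      simp only [mem_iUnion]
      constructor
      · rintro ⟨i, hi⟩
        exact ⟨Encodable.encode i, by simp [Encodable.encodek]; exact hi⟩
      · rintro ⟨n, hn⟩
        revert hn
        cases h' : Encodable.decode (α := ι) n with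
        | none => simp
        | some i => exact fun hn => ⟨i, hn⟩

lemma sigmaTwo_iUnion' {ι : Type*} [Countable ι] {t : ι → Set X}
    (ht : ∀ i, SigmaTwo (AlgGen G) (t i)) : SigmaTwo (AlgGen G) (⋃ i, t i) := by
  choose g hg hgt using ht
  have h : (⋃ i, t i) = ⋃ p : ι × ℕ, g p.1 p.2 := by
    ext x
    simp only [mem_iUnion]
    constructor
    · rintro ⟨i, hi⟩
      rw [hgt i] at hi
      rcases mem_iUnion.1 hi with ⟨n, hn⟩
      exact ⟨(i, n), hn⟩
    · rintro ⟨⟨i, n⟩, hn⟩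
      exact ⟨i, by rw [hgt i]; exact mem_iUnion.2 ⟨n, hn⟩⟩
  rw [h]
  exact sigmaTwo_iUnion fun p => hg p.1 p.2

lemma SigmaTwo.interAlg {s t : Set X} (hs : SigmaTwo (AlgGen G) s)
    (ht : SigmaTwo (AlgGen G) t) : SigmaTwo (AlgGen G) (s ∩ t) := by
  rcases hs with ⟨g, hg, rfl⟩
  rcases ht with ⟨h, hh, rfl⟩
  have : (⋃ n, g n) ∩ (⋃ n, h n) = ⋃ p : ℕ × ℕ, g p.1 ∩ h p.2 := by
    ext x
    simp only [mem_inter_iff, mem_iUnion]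
    constructor
    · rintro ⟨⟨n, hn⟩, ⟨m, hm⟩⟩; exact ⟨(n, m), hn, hm⟩
    · rintro ⟨⟨n, m⟩, hn, hm⟩; exact ⟨⟨n, hn⟩, ⟨m, hm⟩⟩
  rw [this]
  exact sigmaTwo_iUnion fun p => (hg p.1).inter (hh p.2)

end PartA

section PartB

universe u

variable {X : Type u} [TopologicalSpace X]

open Classical in
/-- One step of the exhaustion: a chosen open set whose trace on `Sᶜ` is nonempty and
misses `E` or misses `F` (when possible). -/
def sepStep (E F S : Set X) : Set X :=
  if h : ∃ V : Set X, IsOpen V ∧ (Sᶜ ∩ V).Nonempty ∧ (Sᶜ ∩ V ∩ E = ∅ ∨ Sᶜ ∩ V ∩ F = ∅)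
  then h.choose else ∅

lemma sepStep_isOpen (E F S : Set X) : IsOpen (sepStep E F S) := by
  rw [sepStep]
  split
  · next h => exact h.choose_spec.1
  · exact isOpen_empty

variable {E F : Set X}

def SepHyp (E F : Set X) : Prop :=
  ∀ B : Set X, B.Nonempty →
    ∃ V : Set X, IsOpen V ∧ (B ∩ V).Nonempty ∧ (B ∩ V ∩ E = ∅ ∨ B ∩ V ∩ F = ∅)

lemma sepStep_spec (hsep : SepHyp E F) {S : Set X} (hS : Sᶜ.Nonempty) :
    (Sᶜ ∩ sepStep E F S).Nonempty ∧
      (Sᶜ ∩ sepStep E F S ∩ E = ∅ ∨ Sᶜ ∩ sepStep E F S ∩ F = ∅) := by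
  have h : ∃ V : Set X, IsOpen V ∧ (Sᶜ ∩ V).Nonempty ∧ (Sᶜ ∩ V ∩ E = ∅ ∨ Sᶜ ∩ V ∩ F = ∅) :=
    hsep Sᶜ hS
  rw [sepStep, dif_pos h]
  exact ⟨h.choose_spec.2.1, h.choose_spec.2.2⟩

/-- The transfinite exhaustion by open sets. -/
def chainP (E F : Set X) : Ordinal.{u} → Set X
  | β => ⋃ α : { α : Ordinal.{u} // α < β }, sepStep E F (chainP E F α.1)
termination_by β => β
decreasing_by exact α.2

lemma chainP_def (β : Ordinal.{u}) :
    chainP E F β = ⋃ α : { α : Ordinal.{u} // α < β }, sepStep E F (chainP E F α.1) := by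
  rw [chainP]

lemma chainP_isOpen (β : Ordinal.{u}) : IsOpen (chainP E F β) := by
  rw [chainP_def]
  exact isOpen_iUnion fun α => sepStep_isOpen E F _

lemma chainP_mono : Monotone (chainP E F (X := X)) := by
  intro α β hαβ
  rw [chainP_def α, chainP_def β]
  exact iUnion_subset fun γ => subset_iUnion_of_subset ⟨γ.1, lt_of_lt_of_le γ.2 hαβ⟩ le_rfl

lemma self_lt_add_one (α : Ordinal.{u}) : α < α + 1 := by
  rw [Ordinal.add_one_eq_succ]; exact Order.lt_succ α

lemma sepStep_subset_chainP_succ (α : Ordinal.{u}) :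
    sepStep E F (chainP E F α) ⊆ chainP E F (α + 1) := by
  rw [chainP_def (α + 1)]
  exact subset_iUnion_of_subset (⟨α, self_lt_add_one α⟩ : { γ : Ordinal.{u} // γ < α + 1 })
    le_rfl

lemma chainP_eq_iUnion_succ (β : Ordinal.{u}) :
    chainP E F β = ⋃ α : { α : Ordinal.{u} // α < β }, chainP E F (α.1 + 1) := by
  apply le_antisymm
  · rw [chainP_def]
    exact iUnion_subset fun α =>
      subset_iUnion_of_subset ⟨α.1, α.2⟩ (sepStep_subset_chainP_succ α.1)
  · refine iUnion_subset fun α => chainP_mono ?_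
    rw [Ordinal.add_one_eq_succ, Order.succ_le_iff]
    exact α.2

lemma chainP_succ (α : Ordinal.{u}) :
    chainP E F (α + 1) = chainP E F α ∪ sepStep E F (chainP E F α) := by
  apply le_antisymm
  · rw [chainP_def (α + 1)]
    refine iUnion_subset fun γ => ?_
    have hγ : γ.1 ≤ α := by
      have h2 : γ.1 < Order.succ α := by rw [← Ordinal.add_one_eq_succ]; exact γ.2
      exact Order.lt_succ_iff.1 h2
    rcases lt_or_eq_of_le hγ with h | h
    · intro x hx
      exact Or.inl (by
        rw [chainP_def α]
        exact mem_iUnion.2 ⟨⟨γ.1, h⟩, hx⟩)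
    · intro x hx
      rw [h] at hx
      exact Or.inr hx
  · refine union_subset (chainP_mono ?_) (sepStep_subset_chainP_succ α)
    exact le_of_lt (self_lt_add_one α)

/-- The piece added at stage `α`. -/
def chainPiece (E F : Set X) (α : Ordinal.{u}) : Set X :=
  chainP E F (α + 1) \ chainP E F α

lemma chainPiece_eq (α : Ordinal.{u}) :
    chainPiece E F α = (chainP E F α)ᶜ ∩ sepStep E F (chainP E F α) := by
  rw [chainPiece, chainP_succ, union_diff_left]
  ext x; simp only [mem_diff, mem_inter_iff, mem_compl_iff]; tauto

lemma chainPiece_nonempty (hsep : SepHyp E F) {α : Ordinal.{u}}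
    (h : chainP E F α ≠ univ) : (chainPiece E F α).Nonempty := by
  rw [chainPiece_eq]
  exact (sepStep_spec hsep (nonempty_compl.2 h)).1

lemma chainPiece_pure (hsep : SepHyp E F) (α : Ordinal.{u}) :
    chainPiece E F α ∩ E = ∅ ∨ chainPiece E F α ∩ F = ∅ := by
  by_cases h : chainP E F α = univ
  · left
    have h2 : chainPiece E F α = ∅ := by
      rw [chainPiece_eq, h]; simp
    rw [h2]; simp
  · rw [chainPiece_eq]
    exact (sepStep_spec hsep (nonempty_compl.2 h)).2

lemma chainPiece_disjoint {α β : Ordinal.{u}} (h : α < β) :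
    chainPiece E F α ∩ chainPiece E F β = ∅ := by
  have h1 : chainPiece E F α ⊆ chainP E F β := by
    refine subset_trans diff_subset (chainP_mono ?_)
    rwa [Ordinal.add_one_eq_succ, Order.succ_le_iff]
  ext x
  simp only [mem_inter_iff, mem_empty_iff_false, iff_false, not_and]
  intro hx hx'
  exact hx'.2 (h1 hx)

lemma chainP_eventually_univ (hsep : SepHyp E F) :
    ∃ Λ : Ordinal.{u}, chainP E F Λ = univ := by
  by_contra h
  push_neg at h
  have hne : ∀ α : Ordinal.{u}, (chainPiece E F α).Nonempty := fun α =>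
    chainPiece_nonempty hsep (h α)
  set g : Ordinal.{u} → X := fun α => (hne α).choose with hg
  have hmem : ∀ α, g α ∈ chainPiece E F α := fun α => (hne α).choose_spec
  have hinj : Function.Injective g := by
    intro α β hab
    by_contra hne'
    rcases lt_or_gt_of_ne hne' with hlt | hlt
    · have h0 := chainPiece_disjoint (E := E) (F := F) hlt
      exact absurd (h0 ▸ Set.mem_inter (hmem α) (hab ▸ hmem β)) (by simp)
    · have h0 := chainPiece_disjoint (E := E) (F := F) hlt
      exact absurd (h0 ▸ Set.mem_inter (hmem β) (hab.symm ▸ hmem α)) (by simp)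
  exact Cardinal.not_injective_limitation_set g hinj.injOn

/-- Any nonempty set has a trace inside a single piece, witnessed by an open set. -/
lemma exists_piece_trace (hsep : SepHyp E F) {B : Set X} (hB : B.Nonempty) :
    ∃ α : Ordinal.{u}, (B ∩ chainP E F (α + 1)).Nonempty ∧
      B ∩ chainP E F (α + 1) ⊆ chainPiece E F α := by
  obtain ⟨Λ, hΛ⟩ := chainP_eventually_univ (E := E) (F := F) hsep
  have wf : WellFounded ((· < ·) : Ordinal.{u} → Ordinal.{u} → Prop) :=
    Ordinal.lt_wf
  set S : Set Ordinal.{u} := {ξ | (B ∩ chainP E F ξ).Nonempty} with hS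
  have hSne : S.Nonempty := ⟨Λ, by simp only [hS, mem_setOf_eq, hΛ, inter_univ]; exact hB⟩
  set ξ₀ := wf.min S hSne with hξ₀
  have hmem : (B ∩ chainP E F ξ₀).Nonempty := wf.min_mem S hSne
  have hmin : ∀ ζ < ξ₀, ¬(B ∩ chainP E F ζ).Nonempty := fun ζ hζ h =>
    wf.not_lt_min S h hζ
  -- ξ₀ is a successor: find α < ξ₀ with B ∩ chainP (α+1) nonempty and α+1 = ξ₀
  obtain ⟨x, hxB, hxP⟩ := hmem
  rw [chainP_eq_iUnion_succ] at hxP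
  obtain ⟨⟨α, hα⟩, hx⟩ := mem_iUnion.1 hxP
  have hle : α + 1 ≤ ξ₀ := by
    rw [Ordinal.add_one_eq_succ, Order.succ_le_iff]; exact hα
  have heq : α + 1 = ξ₀ := by
    rcases lt_or_eq_of_le hle with h | h
    · exact absurd ⟨x, hxB, hx⟩ (hmin _ h)
    · exact h
  refine ⟨α, ⟨x, hxB, hx⟩, ?_⟩
  intro y hy
  rw [chainPiece]
  refine ⟨hy.2, fun hy' => ?_⟩
  exact hmin α (lt_of_lt_of_le (self_lt_add_one α) hle) ⟨y, hy.1, hy'⟩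

/-- The separation theorem: if every nonempty set has an open trace missing `E` or
missing `F`, then `E` can be separated from `F` by a resolvable set. -/
theorem exists_resolvable_separating (hsep : SepHyp E F) :
    ∃ R : Set X, Resolvable R ∧ E ⊆ R ∧ R ∩ F = ∅ := by
  classical
  set R : Set X := ⋃ α : Ordinal.{u},
    if (chainPiece E F α ∩ E).Nonempty then chainPiece E F α else ∅ with hR
  have hmemR : ∀ x : X, x ∈ R ↔
      ∃ α, x ∈ chainPiece E F α ∧ (chainPiece E F α ∩ E).Nonempty := by
    intro x
    rw [hR, mem_iUnion]
    constructor
    · rintro ⟨α, hα⟩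
      by_cases h : (chainPiece E F α ∩ E).Nonempty
      · rw [if_pos h] at hα; exact ⟨α, hα, h⟩
      · rw [if_neg h] at hα; exact absurd hα (by simp)
    · rintro ⟨α, hα, h⟩
      exact ⟨α, by rw [if_pos h]; exact hα⟩
  have piece_subset_or_disj : ∀ α : Ordinal.{u},
      (chainPiece E F α ∩ E).Nonempty → chainPiece E F α ⊆ R := by
    intro α h x hx
    exact (hmemR x).2 ⟨α, hx, h⟩
  have piece_disj_R : ∀ α : Ordinal.{u},
      ¬(chainPiece E F α ∩ E).Nonempty → chainPiece E F α ∩ R = ∅ := by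
    intro α h
    ext x
    simp only [mem_inter_iff, mem_empty_iff_false, iff_false, not_and]
    intro hx hxR
    obtain ⟨β, hβ, hβE⟩ := (hmemR x).1 hxR
    have hαβ : α = β := by
      by_contra hne
      rcases lt_or_gt_of_ne hne with hlt | hlt
      · have h0 := chainPiece_disjoint (E := E) (F := F) hlt
        exact absurd (h0 ▸ Set.mem_inter hx hβ) (by simp)
      · have h0 := chainPiece_disjoint (E := E) (F := F) hlt
        exact absurd (h0 ▸ Set.mem_inter hβ hx) (by simp)
    exact h (hαβ ▸ hβE)
  refine ⟨R, ?_, ?_, ?_⟩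
  · -- Resolvable
    intro B hB
    obtain ⟨α, hne, hsub⟩ := exists_piece_trace hsep hB
    refine ⟨chainP E F (α + 1), chainP_isOpen _, hne, ?_⟩
    by_cases h : (chainPiece E F α ∩ E).Nonempty
    · exact Or.inl (subset_trans hsub (piece_subset_or_disj α h))
    · refine Or.inr ?_
      have h0 := piece_disj_R α h
      apply subset_empty_iff.1
      intro x hx
      exact h0 ▸ (⟨hsub ⟨hx.1.1, hx.1.2⟩, hx.2⟩ : x ∈ chainPiece E F α ∩ R)
  · -- E ⊆ R
    intro x hxE
    obtain ⟨α, hne, hsub⟩ := exists_piece_trace hsep (B := {x}) ⟨x, rfl⟩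
    obtain ⟨y, hy⟩ := hne
    have hyx : y = x := hy.1
    subst hyx
    have hx : y ∈ chainPiece E F α := hsub ⟨rfl, hy.2⟩
    exact piece_subset_or_disj α ⟨y, hx, hxE⟩ hx
  · -- R ∩ F = ∅
    ext x
    simp only [mem_inter_iff, mem_empty_iff_false, iff_false, not_and]
    intro hxR hxF
    obtain ⟨α, hα, hαE⟩ := (hmemR x).1 hxR
    rcases chainPiece_pure hsep α with h | h
    · exact hαE.ne_empty h
    · exact absurd (h ▸ Set.mem_inter hα hxF) (by simp)

end PartB

section PartC

variable {K : Type*} [TopologicalSpace K] [CompactSpace K] [T2Space K]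
  [MeasurableSpace K] [BorelSpace K]

instance radonProb_isProbability (ν : RadonProb K) : IsProbabilityMeasure ν.measure :=
  ν.1.2

lemma radonProb_ne_top (ν : RadonProb K) (s : Set K) : ν.measure s ≠ ⊤ :=
  (measure_lt_top ν.measure s).ne

lemma radonProb_toReal_le_one (ν : RadonProb K) (s : Set K) :
    (ν.measure s).toReal ≤ 1 := by
  have := prob_le_one (μ := ν.measure) (s := s)
  rw [← ENNReal.toReal_one]
  exact ENNReal.toReal_mono (by simp) this

lemma radonProb_toReal_nonneg (ν : RadonProb K) (s : Set K) :
    0 ≤ (ν.measure s).toReal := ENNReal.toReal_nonneg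

/-- Key portmanteau-type fact: for `U` open, `ν ↦ ν(U)` is lower semicontinuous on the
space of Radon probability measures. -/
lemma isOpen_lt_measure_open {U : Set K} (hU : IsOpen U) (c : ℝ) :
    IsOpen {ν : RadonProb K | c < (ν.measure U).toReal} := by
  -- test functions
  set ι := {f : C(K, ℝ) // (∀ x, f x ∈ Icc (0:ℝ) 1) ∧ ∀ x ∉ U, f x = 0} with hι
  have key : {ν : RadonProb K | c < (ν.measure U).toReal} =
      ⋃ f : ι, {ν : RadonProb K | c < ∫ x, f.1 x ∂ν.measure} := by
    ext ν
    simp only [mem_setOf_eq, mem_iUnion]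
    constructor
    · intro hc
      rcases lt_or_ge c 0 with hc0 | hc0
      · refine ⟨⟨0, ⟨fun x => by simp, fun x _ => rfl⟩⟩, ?_⟩
        simpa using hc0
      · -- inner regularity gives a compact inside U
        have hlt : ENNReal.ofReal c < ν.measure U :=
          (ENNReal.ofReal_lt_iff_lt_toReal hc0 (radonProb_ne_top ν U)).2 hc
        obtain ⟨C, hCU, hCcomp, hCgt⟩ := ν.2.innerRegular hU.measurableSet _ hlt
        obtain ⟨f, hf0, hf1, hf01⟩ := exists_continuous_zero_one_of_isClosed
          (X := K) hU.isClosed_compl hCcomp.isClosed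
          (disjoint_left.2 fun x hx hxC => hx (hCU hxC))
        refine ⟨⟨f, ⟨hf01, fun x hx => hf0 hx⟩⟩, ?_⟩
        have hcC : c < (ν.measure C).toReal :=
          (ENNReal.ofReal_lt_iff_lt_toReal hc0 (radonProb_ne_top ν C)).1 hCgt
        refine lt_of_lt_of_le hcC ?_
        have hind : ∀ x, C.indicator (1 : K → ℝ) x ≤ f x := by
          intro x
          by_cases hx : x ∈ C
          · rw [indicator_of_mem hx]
            exact le_of_eq (hf1 hx).symm
          · rw [indicator_of_notMem hx]
            exact (hf01 x).1
        calc (ν.measure C).toReal = ∫ x, C.indicator (1 : K → ℝ) x ∂ν.measure := by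
              rw [integral_indicator_one hCcomp.isClosed.measurableSet, measureReal_def]
          _ ≤ ∫ x, f x ∂ν.measure := by
              apply integral_mono
              · exact (integrable_const (1:ℝ)).indicator hCcomp.isClosed.measurableSet
              · exact (BoundedContinuousFunction.mkOfCompact f).integrable ν.measure
              · exact hind
    · rintro ⟨f, hf⟩
      refine lt_of_lt_of_le hf ?_
      have hind : ∀ x, f.1 x ≤ U.indicator (1 : K → ℝ) x := by
        intro x
        by_cases hx : x ∈ U
        · rw [indicator_of_mem hx]
          exact (f.2.1 x).2
        · rw [indicator_of_notMem hx, f.2.2 x hx]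
      calc ∫ x, f.1 x ∂ν.measure ≤ ∫ x, U.indicator (1 : K → ℝ) x ∂ν.measure := by
            apply integral_mono
            · exact (BoundedContinuousFunction.mkOfCompact f.1).integrable ν.measure
            · exact (integrable_const (1:ℝ)).indicator hU.measurableSet
            · exact hind
        _ = (ν.measure U).toReal := integral_indicator_one hU.measurableSet
  rw [key]
  apply isOpen_iUnion
  intro f
  have hcont : Continuous fun ν : RadonProb K => ∫ x, f.1 x ∂ν.measure := by
    have h1 : Continuous fun μ : ProbabilityMeasure K =>
        ∫ x, (BoundedContinuousFunction.mkOfCompact f.1) x ∂(μ : Measure K) :=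
      ProbabilityMeasure.continuous_integral_boundedContinuousFunction _
    exact h1.comp continuous_subtype_val
  exact isOpen_lt continuous_const hcont

/-- τ-additivity for Radon measures: the measure of a directed union of open sets is the
supremum of the measures. -/
lemma radon_iUnion_eq_iSup (ν : RadonProb K) {ι : Type*} {S : ι → Set K}
    (hop : ∀ i, IsOpen (S i)) (hdir : Directed (· ≤ ·) S) :
    ν.measure (⋃ i, S i) = ⨆ i, ν.measure (S i) := by
  apply le_antisymm
  · apply le_of_forall_lt
    intro r hr
    obtain ⟨C, hCsub, hCcomp, hCgt⟩ :=
      ν.2.innerRegular (isOpen_iUnion hop).measurableSet r hr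
    obtain ⟨t, ht⟩ := hCcomp.elim_finite_subcover S hop hCsub
    rcases isEmpty_or_nonempty ι with hemp | hne
    · rw [iUnion_of_empty] at hCsub
      have h0 : ν.measure C = 0 := measure_mono_null hCsub measure_empty
      exact absurd (lt_of_lt_of_le hCgt (le_of_eq h0)) (by simp)
    · obtain ⟨i₀, hi₀⟩ := hdir.finset_le t
      have hsub : C ⊆ S i₀ := subset_trans ht (iUnion₂_subset fun i hi => hi₀ i hi)
      exact lt_of_lt_of_le hCgt ((measure_mono hsub).trans (le_iSup (fun i => ν.measure (S i)) i₀))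
  · exact iSup_le fun i => measure_mono (subset_iUnion S i)

end PartC

section PartD

/-! ### Pinning lemma for lower semicontinuous functions -/

lemma pin_lemma {Y : Type*} [TopologicalSpace Y] (g : Y → ℝ)
    (h0 : ∀ y, 0 ≤ g y) (h1 : ∀ y, g y ≤ 1)
    (hlsc : ∀ c : ℝ, IsOpen {y | c < g y})
    {B : Set Y} (hB : B.Nonempty) {δ : ℝ} (hδ : 0 < δ) :
    ∃ V, IsOpen V ∧ (B ∩ V).Nonempty ∧
      ∀ y ∈ B ∩ V, ∀ y' ∈ B ∩ V, |g y - g y'| ≤ 2 * δ := by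
  classical
  set A : Set ℝ := {s | ∃ V, IsOpen V ∧ (B ∩ V).Nonempty ∧ ∀ y ∈ B ∩ V, g y ≤ s} with hA
  have hAne : A.Nonempty := ⟨1, univ, isOpen_univ, by rwa [inter_univ], fun y _ => h1 y⟩
  have hAbdd : BddBelow A := by
    refine ⟨0, fun s hs => ?_⟩
    obtain ⟨V, _, ⟨y, hy⟩, hbound⟩ := hs
    exact le_trans (h0 y) (hbound y hy)
  set u := sInf A with hu
  obtain ⟨s, hsA, hs⟩ := exists_lt_of_csInf_lt hAne (show sInf A < u + δ by
    rw [← hu]; linarith)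
  obtain ⟨V₁, hV₁open, hV₁ne, hV₁bound⟩ := hsA
  set V₂ := V₁ ∩ {y | u - δ < g y} with hV₂
  refine ⟨V₂, hV₁open.inter (hlsc (u - δ)), ?_, ?_⟩
  · by_contra hemp
    rw [not_nonempty_iff_eq_empty] at hemp
    have hle : ∀ y ∈ B ∩ V₁, g y ≤ u - δ := by
      intro y hy
      by_contra hgt
      push_neg at hgt
      have : y ∈ B ∩ V₂ := ⟨hy.1, hy.2, hgt⟩
      rw [hemp] at this
      exact this
    have : u - δ ∈ A := ⟨V₁, hV₁open, hV₁ne, hle⟩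
    have := csInf_le hAbdd this
    rw [← hu] at this
    linarith
  · intro y hy y' hy'
    have h1y : g y ≤ s := hV₁bound y ⟨hy.1, hy.2.1⟩
    have h2y : u - δ < g y := hy.2.2
    have h1y' : g y' ≤ s := hV₁bound y' ⟨hy'.1, hy'.2.1⟩
    have h2y' : u - δ < g y' := hy'.2.2
    rw [abs_le]
    constructor <;> linarith

/-! ### Fragmentation of `ν ↦ ν(H ∩ P β)` along the chain -/

variable {K : Type u} [TopologicalSpace K] [CompactSpace K] [T2Space K]
  [MeasurableSpace K] [BorelSpace K]

variable (H : Set K)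

/-- `fb H β ν = ν (H ∩ P β)` where `P` is the chain for `(H, Hᶜ)`. -/
def fb (β : Ordinal.{u}) (ν : RadonProb K) : ℝ :=
  (ν.measure (H ∩ chainP H Hᶜ β)).toReal

/-- `pp H β ν = ν (P β)`. -/
def pp (β : Ordinal.{u}) (ν : RadonProb K) : ℝ :=
  (ν.measure (chainP H Hᶜ β)).toReal

variable {H}

lemma resolvable_sepHyp (hres : Resolvable H) : SepHyp H Hᶜ := by
  intro B hB
  obtain ⟨U, hUopen, hUne, hU⟩ := hres B hB
  refine ⟨U, hUopen, hUne, ?_⟩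
  rcases hU with h | h
  · right
    rw [eq_empty_iff_forall_notMem]
    rintro x ⟨hx, hxc⟩
    exact hxc (h hx)
  · left
    exact h

lemma nullH (hH : UnivMeasurableSet H) (ν : RadonProb K) :
    NullMeasurableSet H ν.measure := hH ν.1 ν.2

lemma pp_lsc (β : Ordinal.{u}) (c : ℝ) : IsOpen {ν : RadonProb K | c < pp H β ν} :=
  isOpen_lt_measure_open (chainP_isOpen β) c

lemma pp_nonneg (β : Ordinal.{u}) (ν : RadonProb K) : 0 ≤ pp H β ν :=
  ENNReal.toReal_nonneg

lemma pp_le_one (β : Ordinal.{u}) (ν : RadonProb K) : pp H β ν ≤ 1 :=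
  radonProb_toReal_le_one ν _

/-- Successor step decomposition. -/
lemma fb_succ (hsep : SepHyp H Hᶜ) (β : Ordinal.{u}) :
    (∀ ν : RadonProb K, fb H (β + 1) ν = fb H β ν) ∨
    (∀ ν : RadonProb K, fb H (β + 1) ν = fb H β ν + (pp H (β + 1) ν - pp H β ν)) := by
  have hPsub : chainP H Hᶜ β ⊆ chainP H Hᶜ (β + 1) :=
    chainP_mono (le_of_lt (self_lt_add_one β))
  have hsplit : chainP H Hᶜ (β + 1) = chainP H Hᶜ β ∪ chainPiece H Hᶜ β := by
    rw [chainPiece, union_diff_cancel hPsub]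
  have hdisj : Disjoint (chainP H Hᶜ β) (chainPiece H Hᶜ β) := by
    rw [chainPiece]
    exact disjoint_sdiff_right.mono_left le_rfl
  rcases chainPiece_pure hsep β with hpure | hpure
  · left
    intro ν
    have : H ∩ chainP H Hᶜ (β + 1) = H ∩ chainP H Hᶜ β := by
      rw [hsplit, inter_union_distrib_left]
      have : H ∩ chainPiece H Hᶜ β = ∅ := by
        rw [inter_comm]; exact hpure
      rw [this, union_empty]
    rw [fb, fb, this]
  · right
    have hsubH : chainPiece H Hᶜ β ⊆ H := by
      intro x hx
      by_contra hxH
      exact absurd (hpure ▸ Set.mem_inter hx hxH) (by simp)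
    intro ν
    have hmeasPiece : MeasurableSet (chainPiece H Hᶜ β) :=
      ((chainP_isOpen (β+1)).measurableSet).diff (chainP_isOpen β).measurableSet
    have hmeasP : MeasurableSet (chainP H Hᶜ β) := (chainP_isOpen β).measurableSet
    -- ν (P (β+1)) = ν (P β) + ν piece
    have e1 : ν.measure (chainP H Hᶜ (β + 1)) =
        ν.measure (chainP H Hᶜ β) + ν.measure (chainPiece H Hᶜ β) := by
      rw [hsplit]
      exact measure_union₀ hmeasPiece.nullMeasurableSet hdisj.aedisjoint
    -- ν (H ∩ P (β+1)) = ν (H ∩ P β) + ν piece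
    have e2 : ν.measure (H ∩ chainP H Hᶜ (β + 1)) =
        ν.measure (H ∩ chainP H Hᶜ β) + ν.measure (chainPiece H Hᶜ β) := by
      have : H ∩ chainP H Hᶜ (β + 1) = (H ∩ chainP H Hᶜ β) ∪ chainPiece H Hᶜ β := by
        rw [hsplit, inter_union_distrib_left, inter_eq_right.2 hsubH]
      rw [this]
      exact measure_union₀ hmeasPiece.nullMeasurableSet
        ((hdisj.mono_left inter_subset_right).aedisjoint)
    rw [fb, fb, pp, pp, e1, e2,
      ENNReal.toReal_add (radonProb_ne_top ν _) (radonProb_ne_top ν _),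
      ENNReal.toReal_add (radonProb_ne_top ν _) (radonProb_ne_top ν _)]
    ring

/-- Gap estimate between two stages. -/
lemma fb_gap (hH : UnivMeasurableSet H) {α β : Ordinal.{u}} (hle : α + 1 ≤ β) (ν : RadonProb K) :
    0 ≤ fb H β ν - fb H (α + 1) ν ∧
      fb H β ν - fb H (α + 1) ν ≤ pp H β ν - pp H (α + 1) ν := by
  have hsub : chainP H Hᶜ (α + 1) ⊆ chainP H Hᶜ β := chainP_mono hle
  set D := chainP H Hᶜ β \ chainP H Hᶜ (α + 1) with hD
  have hmeasD : MeasurableSet D :=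
    ((chainP_isOpen β).measurableSet).diff (chainP_isOpen (α+1)).measurableSet
  have hsplit : chainP H Hᶜ β = chainP H Hᶜ (α + 1) ∪ D := (union_diff_cancel hsub).symm
  have hdisj : Disjoint (chainP H Hᶜ (α + 1)) D := disjoint_sdiff_right
  have e1 : ν.measure (chainP H Hᶜ β) = ν.measure (chainP H Hᶜ (α + 1)) + ν.measure D := by
    conv_lhs => rw [hsplit]
    exact measure_union₀ hmeasD.nullMeasurableSet hdisj.aedisjoint
  have e2 : ν.measure (H ∩ chainP H Hᶜ β) =
      ν.measure (H ∩ chainP H Hᶜ (α + 1)) + ν.measure (H ∩ D) := by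
    have hsp2 : H ∩ chainP H Hᶜ β = (H ∩ chainP H Hᶜ (α + 1)) ∪ (H ∩ D) := by
      rw [hsplit, inter_union_distrib_left]
    rw [hsp2]
    exact measure_union₀ ((nullH hH ν).inter hmeasD.nullMeasurableSet)
      ((hdisj.mono inter_subset_right inter_subset_right).aedisjoint)
  have hle2 : ν.measure (H ∩ D) ≤ ν.measure D := measure_mono inter_subset_right
  have h1 : fb H β ν = fb H (α + 1) ν + (ν.measure (H ∩ D)).toReal := by
    rw [fb, fb, e2, ENNReal.toReal_add (radonProb_ne_top ν _) (radonProb_ne_top ν _)]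
  have h2 : pp H β ν = pp H (α + 1) ν + (ν.measure D).toReal := by
    rw [pp, pp, e1, ENNReal.toReal_add (radonProb_ne_top ν _) (radonProb_ne_top ν _)]
  have h3 : (ν.measure (H ∩ D)).toReal ≤ (ν.measure D).toReal :=
    ENNReal.toReal_mono (radonProb_ne_top ν _) hle2
  constructor
  · rw [h1]; have := ENNReal.toReal_nonneg (a := ν.measure (H ∩ D)); linarith
  · rw [h1, h2]; linarith

/-- supremum formula for `pp` at any stage. -/
lemma pp_iSup (β : Ordinal.{u}) (ν : RadonProb K) :
    ν.measure (chainP H Hᶜ β) =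
      ⨆ α : {α : Ordinal.{u} // α < β}, ν.measure (chainP H Hᶜ (α.1 + 1)) := by
  have h := chainP_eq_iUnion_succ (E := H) (F := Hᶜ) β
  rw [h]
  refine radon_iUnion_eq_iSup ν (fun α => chainP_isOpen _) ?_
  have hmono : Monotone fun α : {α : Ordinal.{u} // α < β} => chainP H Hᶜ (α.1 + 1) := by
    intro a b hab
    exact chainP_mono (by
      have : a.1 ≤ b.1 := hab
      exact add_le_add_left this 1)
  exact hmono.directed_le

/-- The main fragmentation result, by transfinite induction. -/
theorem fb_fragmented (hH : UnivMeasurableSet H) (hsep : SepHyp H Hᶜ) (β : Ordinal.{u}) :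
    ∀ B : Set (RadonProb K), B.Nonempty → ∀ ε : ℝ, 0 < ε →
      ∃ V, IsOpen V ∧ (B ∩ V).Nonempty ∧
        ∀ ν ∈ B ∩ V, ∀ ν' ∈ B ∩ V, |fb H β ν - fb H β ν'| ≤ ε := by
  induction β using Ordinal.induction with
  | h β IH =>
  rcases Ordinal.zero_or_succ_or_isSuccLimit β with hz | ⟨γ, hγ⟩ | hlim
  · -- β = 0
    subst hz
    intro B hB ε hε
    have hP0 : chainP H Hᶜ (0 : Ordinal.{u}) = ∅ := by
      rw [chainP_def]
      haveI : IsEmpty {α : Ordinal.{u} // α < 0} :=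
        ⟨fun x => (not_lt_of_ge (zero_le (a := x.1)) x.2)⟩
      exact iUnion_of_empty _
    have hfb : ∀ ν : RadonProb K, fb H 0 ν = 0 := by
      intro ν
      rw [fb, hP0, inter_empty, measure_empty]
      rfl
    exact ⟨univ, isOpen_univ, by rwa [inter_univ], fun ν _ ν' _ => by
      rw [hfb ν, hfb ν']; simpa using le_of_lt hε⟩
  · -- β = γ + 1
    have hβ : β = γ + 1 := by rw [← hγ, Ordinal.add_one_eq_succ]
    subst hβ
    intro B hB ε hε
    rcases fb_succ hsep γ with heq | heq
    · obtain ⟨V, hV, hVne, hosc⟩ := IH γ (self_lt_add_one γ) B hB ε hε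
      exact ⟨V, hV, hVne, fun ν hν ν' hν' => by
        rw [heq ν, heq ν']; exact hosc ν hν ν' hν'⟩
    · obtain ⟨V₁, hV₁, hV₁ne, hosc₁⟩ := IH γ (self_lt_add_one γ) B hB (ε/3) (by linarith)
      obtain ⟨V₂, hV₂, hV₂ne, hosc₂⟩ := pin_lemma (pp H γ) (pp_nonneg γ) (pp_le_one γ)
        (pp_lsc γ) hV₁ne (δ := ε/6) (by linarith)
      rw [inter_assoc] at hV₂ne hosc₂
      obtain ⟨V₃, hV₃, hV₃ne, hosc₃⟩ := pin_lemma (pp H (γ+1)) (pp_nonneg (γ+1))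
        (pp_le_one (γ+1)) (pp_lsc (γ+1)) hV₂ne (δ := ε/6) (by linarith)
      rw [inter_assoc] at hV₃ne hosc₃
      refine ⟨V₁ ∩ V₂ ∩ V₃, (hV₁.inter hV₂).inter hV₃, hV₃ne, ?_⟩
      intro ν hν ν' hν'
      have hν1 : ν ∈ B ∩ V₁ := ⟨hν.1, hν.2.1.1⟩
      have hν1' : ν' ∈ B ∩ V₁ := ⟨hν'.1, hν'.2.1.1⟩
      have hν2 : ν ∈ B ∩ (V₁ ∩ V₂) := ⟨hν.1, hν.2.1⟩
      have hν2' : ν' ∈ B ∩ (V₁ ∩ V₂) := ⟨hν'.1, hν'.2.1⟩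
      have d1 := hosc₁ ν hν1 ν' hν1'
      have d2 := hosc₂ ν hν2 ν' hν2'
      have d3 := hosc₃ ν hν ν' hν'
      rw [heq ν, heq ν']
      rw [abs_le] at d1 d2 d3 ⊢
      constructor <;> [nlinarith [d1.1, d1.2, d2.1, d2.2, d3.1, d3.2];
        nlinarith [d1.1, d1.2, d2.1, d2.2, d3.1, d3.2]]
  · -- β limit
    intro B hB ε hε
    set δ := ε / 7 with hδdef
    have hδ : 0 < δ := by rw [hδdef]; linarith
    obtain ⟨V₁, hV₁, hV₁ne, hosc₁⟩ := pin_lemma (pp H β) (pp_nonneg β) (pp_le_one β)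
      (pp_lsc β) hB (δ := δ/2) (by linarith)
    have hosc₁' : ∀ y ∈ B ∩ V₁, ∀ y' ∈ B ∩ V₁, |pp H β y - pp H β y'| ≤ δ := by
      intro y hy y' hy'
      have := hosc₁ y hy y' hy'
      linarith
    obtain ⟨ν₀, hν₀⟩ := hV₁ne
    set c := pp H β ν₀ - δ with hc
    have hex : ∃ α : Ordinal.{u}, α < β ∧ c < pp H (α + 1) ν₀ := by
      rcases lt_or_ge c 0 with hc0 | hc0
      · exact ⟨0, hlim.pos, lt_of_lt_of_le hc0 (pp_nonneg _ _)⟩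
      · have hlt : ENNReal.ofReal c < ν₀.measure (chainP H Hᶜ β) := by
          rw [ENNReal.ofReal_lt_iff_lt_toReal hc0 (radonProb_ne_top ν₀ _)]
          rw [hc]
          have : pp H β ν₀ = (ν₀.measure (chainP H Hᶜ β)).toReal := rfl
          linarith [hδ]
        rw [pp_iSup β ν₀, lt_iSup_iff] at hlt
        obtain ⟨⟨α, hα⟩, hαlt⟩ := hlt
        refine ⟨α, hα, ?_⟩
        show c < (ν₀.measure (chainP H Hᶜ (α + 1))).toReal
        exact (ENNReal.ofReal_lt_iff_lt_toReal hc0 (radonProb_ne_top ν₀ _)).1 hαlt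
    obtain ⟨α, hαβ, hαc⟩ := hex
    set V₂ := V₁ ∩ {ν : RadonProb K | c < pp H (α + 1) ν} with hV₂def
    have hV₂ : IsOpen V₂ := hV₁.inter (pp_lsc (α+1) c)
    have hV₂ne : (B ∩ V₂).Nonempty := ⟨ν₀, hν₀.1, hν₀.2, hαc⟩
    have hgap : ∀ ν ∈ B ∩ V₂, 0 ≤ fb H β ν - fb H (α + 1) ν ∧
        fb H β ν - fb H (α + 1) ν ≤ 3 * δ := by
      intro ν hν
      have hsucc : α + 1 ≤ β := by
        rw [Ordinal.add_one_eq_succ]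
        exact (Order.succ_le_of_lt hαβ)
      obtain ⟨hg0, hg1⟩ := fb_gap hH hsucc ν
      refine ⟨hg0, le_trans hg1 ?_⟩
      have h1 : c < pp H (α + 1) ν := hν.2.2
      have h2 : |pp H β ν - pp H β ν₀| ≤ δ :=
        hosc₁' ν ⟨hν.1, hν.2.1⟩ ν₀ hν₀
      rw [abs_le] at h2
      have h3 : pp H (α + 1) ν ≤ pp H β ν := by
        rw [pp, pp]
        refine ENNReal.toReal_mono (radonProb_ne_top ν _) (measure_mono (chainP_mono ?_))
        rw [Ordinal.add_one_eq_succ]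
        exact Order.succ_le_of_lt hαβ
      rw [hc] at h1
      linarith [h2.1, h2.2]
    have hsucclt : α + 1 < β := by
      rw [Ordinal.add_one_eq_succ]
      exact hlim.succ_lt hαβ
    obtain ⟨V₃, hV₃, hV₃ne, hosc₃⟩ := IH (α + 1) hsucclt (B ∩ V₂) hV₂ne δ hδ
    rw [inter_assoc] at hV₃ne hosc₃
    refine ⟨V₂ ∩ V₃, hV₂.inter hV₃, hV₃ne, ?_⟩
    intro ν hν ν' hν'
    have hνV₂ : ν ∈ B ∩ V₂ := ⟨hν.1, hν.2.1⟩
    have hνV₂' : ν' ∈ B ∩ V₂ := ⟨hν'.1, hν'.2.1⟩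
    obtain ⟨g0, g1⟩ := hgap ν hνV₂
    obtain ⟨g0', g1'⟩ := hgap ν' hνV₂'
    have d3 := hosc₃ ν hν ν' hν'
    rw [abs_le] at d3 ⊢
    constructor <;> [linarith [d3.1, d3.2]; linarith [d3.1, d3.2]]

end PartD

section PartE

/-! ### From fragmentation to resolvable separation in `M¹(K)` -/

variable {K : Type u} [TopologicalSpace K] [CompactSpace K] [T2Space K]
  [MeasurableSpace K] [BorelSpace K] {H : Set K}

theorem ftilde_fragmented (hH : UnivMeasurableSet H) (hres : Resolvable H) :
    ∀ B : Set (RadonProb K), B.Nonempty → ∀ ε : ℝ, 0 < ε →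
      ∃ V, IsOpen V ∧ (B ∩ V).Nonempty ∧ ∀ ν ∈ B ∩ V, ∀ ν' ∈ B ∩ V,
        |(ν.measure H).toReal - (ν'.measure H).toReal| ≤ ε := by
  have hsep := resolvable_sepHyp hres
  obtain ⟨Λ, hΛ⟩ := chainP_eventually_univ (E := H) (F := Hᶜ) hsep
  intro B hB ε hε
  obtain ⟨V, h1, h2, h3⟩ := fb_fragmented hH hsep Λ B hB ε hε
  refine ⟨V, h1, h2, fun ν hν ν' hν' => ?_⟩
  have h4 := h3 ν hν ν' hν'
  rwa [fb, fb, hΛ, inter_univ] at h4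

theorem exists_R (hH : UnivMeasurableSet H) (hres : Resolvable H) {a b : ℝ} (hab : a < b) :
    ∃ R : Set (RadonProb K), Resolvable R ∧
      {ν : RadonProb K | b ≤ (ν.measure H).toReal} ⊆ R ∧
      R ∩ {ν : RadonProb K | (ν.measure H).toReal ≤ a} = ∅ := by
  refine exists_resolvable_separating
    (E := {ν : RadonProb K | b ≤ (ν.measure H).toReal})
    (F := {ν : RadonProb K | (ν.measure H).toReal ≤ a}) ?_
  intro B hB
  obtain ⟨V, h1, h2, h3⟩ := ftilde_fragmented hH hres B hB ((b - a) / 2) (by linarith)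
  refine ⟨V, h1, h2, ?_⟩
  by_contra hcon
  push_neg at hcon
  obtain ⟨h4, h5⟩ := hcon
  obtain ⟨ν, hν⟩ := h4
  obtain ⟨ν', hν'⟩ := h5
  have hb : b ≤ (ν.measure H).toReal := hν.2
  have ha : (ν'.measure H).toReal ≤ a := hν'.2
  have := h3 ν ⟨hν.1.1, hν.1.2⟩ ν' ⟨hν'.1.1, hν'.1.2⟩
  rw [abs_le] at this
  linarith [this.1, this.2]

/-! ### Generic reduction from open sets to rational intervals -/

lemma sigmaTwo_preimage_open {Y : Type*} {G : Set Y → Prop} {f : Y → ℝ}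
    (h : ∀ p s : ℚ, SigmaTwo (AlgGen G) (f ⁻¹' Ioo (p : ℝ) (s : ℝ)))
    {U : Set ℝ} (hU : IsOpen U) : SigmaTwo (AlgGen G) (f ⁻¹' U) := by
  have key : f ⁻¹' U = ⋃ ps : {ps : ℚ × ℚ // Ioo (ps.1 : ℝ) (ps.2 : ℝ) ⊆ U},
      f ⁻¹' Ioo (ps.1.1 : ℝ) (ps.1.2 : ℝ) := by
    ext y
    simp only [mem_preimage, mem_iUnion]
    constructor
    · intro hy
      obtain ⟨ε, hε, hball⟩ := Metric.isOpen_iff.1 hU (f y) hy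
      obtain ⟨p, hp1, hp2⟩ := exists_rat_btwn (show f y - ε < f y by linarith)
      obtain ⟨s, hs1, hs2⟩ := exists_rat_btwn (show f y < f y + ε by linarith)
      refine ⟨⟨(p, s), ?_⟩, ⟨hp2, hs1⟩⟩
      intro z hz
      apply hball
      rw [Real.ball_eq_Ioo]
      exact ⟨lt_trans hp1 hz.1, lt_trans hz.2 hs2⟩
    · rintro ⟨⟨⟨p, s⟩, hsub⟩, hy⟩
      exact hsub hy
  rw [key]
  exact sigmaTwo_iUnion' fun ps => h ps.1.1 ps.1.2

/-! ### The `Hs` preimage of a rational interval -/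

lemma hs_Ioo (hH : UnivMeasurableSet H) (hres : Resolvable H) (p s : ℚ) :
    SigmaTwo (AlgGen fun A : Set (RadonProb K) => Resolvable A)
      ((fun ν : RadonProb K => (ν.measure H).toReal) ⁻¹' Ioo (p : ℝ) (s : ℝ)) := by
  classical
  have hR : ∀ a b : ℝ, a < b → ∃ R : Set (RadonProb K), Resolvable R ∧
      {ν : RadonProb K | b ≤ (ν.measure H).toReal} ⊆ R ∧
      R ∩ {ν : RadonProb K | (ν.measure H).toReal ≤ a} = ∅ :=
    fun a b hab => exists_R hH hres hab
  choose R hRres hRsub hRdisj using hR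
  set f := fun ν : RadonProb K => (ν.measure H).toReal with hf
  have key : f ⁻¹' Ioo (p : ℝ) (s : ℝ) =
      ⋃ qr : {qr : ℚ × ℚ // (p : ℝ) < (qr.1 : ℝ) ∧ (qr.2 : ℝ) < (s : ℝ)},
        R (p : ℝ) (qr.1.1 : ℝ) qr.2.1 ∩ (R (qr.1.2 : ℝ) (s : ℝ) qr.2.2)ᶜ := by
    ext ν
    simp only [mem_preimage, mem_iUnion, mem_Ioo, mem_inter_iff, mem_compl_iff]
    constructor
    · rintro ⟨h1, h2⟩
      obtain ⟨q, hq1, hq2⟩ := exists_rat_btwn h1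
      obtain ⟨r, hr1, hr2⟩ := exists_rat_btwn h2
      refine ⟨⟨(q, r), hq1, hr2⟩, ?_, ?_⟩
      · exact hRsub (p : ℝ) (q : ℝ) hq1 (le_of_lt hq2)
      · intro hmem
        have h0 := hRdisj (r : ℝ) (s : ℝ) hr2
        have h1' : ν ∈ {ν : RadonProb K | (ν.measure H).toReal ≤ (r : ℝ)} := le_of_lt hr1
        exact absurd (h0 ▸ Set.mem_inter hmem h1') (by simp)
    · rintro ⟨⟨⟨q, r⟩, hq, hr⟩, hmem, hnmem⟩
      constructor
      · by_contra hle
        push_neg at hle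
        have h0 := hRdisj (p : ℝ) (q : ℝ) hq
        have h1' : ν ∈ {ν : RadonProb K | (ν.measure H).toReal ≤ (p : ℝ)} := hle
        exact absurd (h0 ▸ Set.mem_inter hmem h1') (by simp)
      · by_contra hle
        push_neg at hle
        exact hnmem (hRsub (r : ℝ) (s : ℝ) hr (show (s:ℝ) ≤ _ from hle))
  rw [key]
  exact sigmaTwo_iUnion fun qr =>
    (AlgGen.basic _ (hRres (p : ℝ) (qr.1.1 : ℝ) qr.2.1)).inter
      (AlgGen.compl _ (AlgGen.basic _ (hRres (qr.1.2 : ℝ) (s : ℝ) qr.2.2)))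

/-! ### Bos part: representations by indicators of open sets -/

/-- Evaluation of a formal linear combination of indicator functions. -/
def indSum (L : List (ℝ × Set K)) (x : K) : ℝ :=
  (L.map fun p => p.1 * Set.indicator p.2 (1 : K → ℝ) x).sum

def myProd {A B : Type*} : List A → List B → List (A × B)
  | [], _ => []
  | a :: l, m => (m.map (Prod.mk a)) ++ myProd l m

lemma list_sum_neg {A : Type*} (l : List A) (f : A → ℝ) :
    (l.map fun a => -f a).sum = -(l.map f).sum := by
  induction l with
  | nil => simp
  | cons a l ih => simp [ih]; ring

lemma list_sum_mul_left {A : Type*} (l : List A) (f : A → ℝ) (c : ℝ) :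
    (l.map fun a => c * f a).sum = c * (l.map f).sum := by
  induction l with
  | nil => simp
  | cons a l ih => simp [ih]; ring

lemma list_sum_sub {A : Type*} (l : List A) (f g : A → ℝ) :
    (l.map fun a => f a - g a).sum = (l.map f).sum - (l.map g).sum := by
  induction l with
  | nil => simp
  | cons a l ih => simp [ih]; ring

lemma myProd_mem {A B : Type*} {L : List A} {M : List B} {pq : A × B}
    (h : pq ∈ myProd L M) : pq.1 ∈ L ∧ pq.2 ∈ M := by
  induction L with
  | nil => simp [myProd] at h
  | cons a l ih =>
    rw [myProd, List.mem_append] at h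
    rcases h with h | h
    · obtain ⟨b, hb, rfl⟩ := List.mem_map.1 h
      exact ⟨List.mem_cons_self, hb⟩
    · obtain ⟨h1, h2⟩ := ih h
      exact ⟨List.mem_cons_of_mem a h1, h2⟩

lemma myProd_sum {A B : Type*} (L : List A) (M : List B) (f : A → ℝ) (g : B → ℝ) :
    ((myProd L M).map fun pq => f pq.1 * g pq.2).sum = (L.map f).sum * (M.map g).sum := by
  induction L with
  | nil => simp [myProd]
  | cons a l ih =>
    rw [myProd, List.map_append, List.sum_append, ih, List.map_map, List.map_cons,
      List.sum_cons]
    have : (M.map ((fun pq : A × B => f pq.1 * g pq.2) ∘ Prod.mk a)).sum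
        = f a * (M.map g).sum := by
      rw [show ((fun pq : A × B => f pq.1 * g pq.2) ∘ Prod.mk a) = fun b => f a * g b by rfl]
      exact list_sum_mul_left M g (f a)
    rw [this]
    ring

lemma indicator_inter_mul (s t : Set K) (x : K) :
    Set.indicator (s ∩ t) (1 : K → ℝ) x =
      Set.indicator s (1 : K → ℝ) x * Set.indicator t (1 : K → ℝ) x := by
  by_cases hs : x ∈ s <;> by_cases ht : x ∈ t <;>
    simp [Set.indicator_of_mem, Set.indicator_of_notMem, hs, ht, mem_inter_iff]

lemma indSum_append (L M : List (ℝ × Set K)) (x : K) :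
    indSum (L ++ M) x = indSum L x + indSum M x := by
  rw [indSum, indSum, indSum, List.map_append, List.sum_append]

lemma indSum_neg (L : List (ℝ × Set K)) (x : K) :
    indSum (L.map fun p => (-p.1, p.2)) x = -indSum L x := by
  rw [indSum, indSum, List.map_map]
  rw [show ((fun p : ℝ × Set K => p.1 * Set.indicator p.2 (1 : K → ℝ) x) ∘
      fun p : ℝ × Set K => (-p.1, p.2)) =
      fun p : ℝ × Set K => -(p.1 * Set.indicator p.2 (1 : K → ℝ) x) by
    funext p; simp]
  exact list_sum_neg _ _

lemma indSum_prod (L M : List (ℝ × Set K)) (x : K) :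
    indSum ((myProd L M).map fun ab => (ab.1.1 * ab.2.1, ab.1.2 ∩ ab.2.2)) x =
      indSum L x * indSum M x := by
  rw [indSum, List.map_map]
  rw [show ((fun p : ℝ × Set K => p.1 * Set.indicator p.2 (1 : K → ℝ) x) ∘
      fun ab : (ℝ × Set K) × (ℝ × Set K) => (ab.1.1 * ab.2.1, ab.1.2 ∩ ab.2.2)) =
      fun ab : (ℝ × Set K) × (ℝ × Set K) =>
        (ab.1.1 * Set.indicator ab.1.2 (1 : K → ℝ) x) *
        (ab.2.1 * Set.indicator ab.2.2 (1 : K → ℝ) x) by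
    funext ab
    simp only [Function.comp_apply, indicator_inter_mul]
    ring]
  exact myProd_sum L M (fun p => p.1 * Set.indicator p.2 (1 : K → ℝ) x)
    (fun p => p.1 * Set.indicator p.2 (1 : K → ℝ) x)

/-- Every set in the algebra generated by the open sets has an indicator function which is
a finite linear combination of indicators of open sets. -/
lemma bos_rep {H' : Set K} (hB : AlgGen (fun s : Set K => IsOpen s) H') :
    ∃ L : List (ℝ × Set K), (∀ p ∈ L, IsOpen p.2) ∧
      ∀ x : K, Set.indicator H' (1 : K → ℝ) x = indSum L x := by
  induction hB with
  | basic s hs =>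
    refine ⟨[(1, s)], by simpa using hs, fun x => ?_⟩
    simp [indSum]
  | empty =>
    exact ⟨[], by simp, fun x => by simp [indSum]⟩
  | compl s _ ih =>
    obtain ⟨L, hL, hrep⟩ := ih
    refine ⟨(1, univ) :: L.map fun p => (-p.1, p.2), ?_, fun x => ?_⟩
    · intro p hp
      rcases List.mem_cons.1 hp with rfl | hp
      · exact isOpen_univ
      · obtain ⟨q, hq, rfl⟩ := List.mem_map.1 hp
        exact hL q hq
    · have h1 : indSum ((1, univ) :: L.map fun p => (-p.1, p.2)) x =
          1 + indSum (L.map fun p => (-p.1, p.2)) x := by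
        rw [indSum, List.map_cons, List.sum_cons, ← indSum]
        simp [Set.indicator_of_mem (mem_univ x)]
      rw [h1, indSum_neg, ← hrep x]
      by_cases hx : x ∈ s <;>
        simp [Set.indicator_of_mem, Set.indicator_of_notMem, hx]
  | union s t _ _ ihs iht =>
    obtain ⟨Ls, hLs, hreps⟩ := ihs
    obtain ⟨Lt, hLt, hrept⟩ := iht
    refine ⟨Ls ++ Lt ++ (((myProd Ls Lt).map fun ab => (ab.1.1 * ab.2.1, ab.1.2 ∩ ab.2.2)).map
      fun p => (-p.1, p.2)), ?_, fun x => ?_⟩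
    · intro p hp
      rcases List.mem_append.1 hp with hp | hp
      · rcases List.mem_append.1 hp with hp | hp
        · exact hLs p hp
        · exact hLt p hp
      · obtain ⟨q, hq, rfl⟩ := List.mem_map.1 hp
        obtain ⟨ab, hab, rfl⟩ := List.mem_map.1 hq
        obtain ⟨h1, h2⟩ := myProd_mem hab
        exact (hLs _ h1).inter (hLt _ h2)
    · rw [indSum_append, indSum_append, indSum_neg, indSum_prod, ← hreps x, ← hrept x]
      by_cases hs : x ∈ s <;> by_cases ht : x ∈ t <;>
        simp [Set.indicator_of_mem, Set.indicator_of_notMem, hs, ht, mem_union]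

/-! ### Integrating an indicator representation -/

lemma integrable_indSum (ν : RadonProb K) (L : List (ℝ × Set K))
    (hL : ∀ p ∈ L, IsOpen p.2) : Integrable (fun x => indSum L x) ν.measure := by
  induction L with
  | nil => simp [indSum]
  | cons a L ih =>
    have h1 : (fun x => indSum (a :: L) x) =
        (fun x => a.1 * Set.indicator a.2 (1 : K → ℝ) x + indSum L x) := by
      funext x; rw [indSum, List.map_cons, List.sum_cons, ← indSum]
    rw [h1]
    have ha : Integrable (fun x => a.1 * Set.indicator a.2 (1 : K → ℝ) x) ν.measure := by
      apply Integrable.const_mul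
      exact (integrable_const (1 : ℝ)).indicator (hL a (List.mem_cons_self)).measurableSet
    exact ha.add (ih fun p hp => hL p (List.mem_cons_of_mem a hp))

lemma indSum_integral (ν : RadonProb K) (L : List (ℝ × Set K))
    (hL : ∀ p ∈ L, IsOpen p.2) :
    ∫ x, indSum L x ∂ν.measure = (L.map fun p => p.1 * (ν.measure p.2).toReal).sum := by
  induction L with
  | nil => simp [indSum]
  | cons a L ih =>
    have h1 : (fun x => indSum (a :: L) x) =
        (fun x => a.1 * Set.indicator a.2 (1 : K → ℝ) x + indSum L x) := by
      funext x; rw [indSum, List.map_cons, List.sum_cons, ← indSum]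
    rw [h1, integral_add
      (by
        apply Integrable.const_mul
        exact (integrable_const (1 : ℝ)).indicator
          (hL a (List.mem_cons_self)).measurableSet)
      (integrable_indSum ν L fun p hp => hL p (List.mem_cons_of_mem a hp)),
      integral_const_mul, integral_indicator_one (hL a (List.mem_cons_self)).measurableSet,
      ih fun p hp => hL p (List.mem_cons_of_mem a hp), List.map_cons, List.sum_cons, measureReal_def]

lemma ftilde_eq_listval (hH : UnivMeasurableSet H) (L : List (ℝ × Set K))
    (hL : ∀ p ∈ L, IsOpen p.2)
    (hrep : ∀ x : K, Set.indicator H (1 : K → ℝ) x = indSum L x) (ν : RadonProb K) :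
    (ν.measure H).toReal = (L.map fun p => p.1 * (ν.measure p.2).toReal).sum := by
  set T := toMeasurable ν.measure H with hT
  have hTm : MeasurableSet T := measurableSet_toMeasurable _ _
  have hTae : T =ᵐ[ν.measure] H := (nullH hH ν).toMeasurable_ae_eq
  have h1 : ∫ x, Set.indicator H (1 : K → ℝ) x ∂ν.measure = (ν.measure H).toReal := by
    rw [integral_congr_ae (indicator_ae_eq_of_ae_eq_set hTae.symm)]
    rw [integral_indicator_one hTm]
    rw [measureReal_def, measure_toMeasurable]
  rw [← h1, show (fun x => Set.indicator H (1 : K → ℝ) x) = fun x => indSum L x from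
    funext hrep]
  exact indSum_integral ν L hL

/-! ### Lower semicontinuity of nonnegative combinations -/

lemma lsc_add {Y : Type*} [TopologicalSpace Y] {g h : Y → ℝ}
    (hg : ∀ c : ℝ, IsOpen {y | c < g y}) (hh : ∀ c : ℝ, IsOpen {y | c < h y}) (c : ℝ) :
    IsOpen {y | c < g y + h y} := by
  have key : {y | c < g y + h y} = ⋃ q : ℚ, ({y | (q : ℝ) < g y} ∩ {y | c - q < h y}) := by
    ext y
    simp only [mem_setOf_eq, mem_iUnion, mem_inter_iff]
    constructor
    · intro hy
      obtain ⟨q, hq1, hq2⟩ := exists_rat_btwn (show c - h y < g y by linarith)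
      exact ⟨q, hq2, by linarith⟩
    · rintro ⟨q, h1, h2⟩
      linarith
  rw [key]
  exact isOpen_iUnion fun q => (hg _).inter (hh _)

lemma lsc_const_mul {Y : Type*} [TopologicalSpace Y] {g : Y → ℝ}
    (hg : ∀ c : ℝ, IsOpen {y | c < g y}) {a : ℝ} (ha : 0 ≤ a) (c : ℝ) :
    IsOpen {y | c < a * g y} := by
  rcases eq_or_lt_of_le ha with rfl | ha'
  · simp only [zero_mul]
    rcases lt_or_ge c 0 with h | h
    · have : {y : Y | c < 0} = univ := by ext y; simpa using h
      rw [this]; exact isOpen_univ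
    · have : {y : Y | c < 0} = ∅ := by ext y; simpa using not_lt.2 h
      rw [this]; exact isOpen_empty
  · have : {y | c < a * g y} = {y | c / a < g y} := by
      ext y
      simp only [mem_setOf_eq]
      rw [div_lt_iff₀' ha']
    rw [this]
    exact hg _

lemma lsc_listval (L : List (ℝ × Set K)) (hL : ∀ p ∈ L, IsOpen p.2)
    (hpos : ∀ p ∈ L, 0 ≤ p.1) :
    ∀ c : ℝ,
      IsOpen {ν : RadonProb K | c < (L.map fun p => p.1 * (ν.measure p.2).toReal).sum} := by
  induction L with
  | nil =>
    intro c
    simp only [List.map_nil, List.sum_nil]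
    rcases lt_or_ge c 0 with h | h
    · have : {ν : RadonProb K | c < 0} = univ := by ext ν; simpa using h
      rw [this]; exact isOpen_univ
    · have : {ν : RadonProb K | c < 0} = ∅ := by ext ν; simpa using not_lt.2 h
      rw [this]; exact isOpen_empty
  | cons a L ih =>
    intro c
    simp only [List.map_cons, List.sum_cons]
    refine lsc_add (g := fun ν : RadonProb K => a.1 * (ν.measure a.2).toReal)
      (h := fun ν : RadonProb K => (L.map fun p => p.1 * (ν.measure p.2).toReal).sum) ?_ ?_ c
    · exact fun c' => lsc_const_mul
        (fun c'' => isOpen_lt_measure_open (hL a (List.mem_cons_self)) c'')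
        (hpos a (List.mem_cons_self)) c'
    · exact ih (fun p hp => hL p (List.mem_cons_of_mem a hp))
        (fun p hp => hpos p (List.mem_cons_of_mem a hp))

/-! ### Differences of lower semicontinuous functions -/

lemma sigmaTwo_lt_sub {Y : Type*} [TopologicalSpace Y] {g h : Y → ℝ}
    (hg : ∀ c : ℝ, IsOpen {y | c < g y}) (hh : ∀ c : ℝ, IsOpen {y | c < h y}) (c : ℝ) :
    SigmaTwo (AlgGen fun s : Set Y => IsOpen s) {y | c < g y - h y} := by
  have key : {y | c < g y - h y} =
      ⋃ q : ℚ, ({y | c + q < g y} ∩ {y | (q : ℝ) < h y}ᶜ) := by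
    ext y
    simp only [mem_setOf_eq, mem_iUnion, mem_inter_iff, mem_compl_iff, not_lt]
    constructor
    · intro hy
      obtain ⟨q, hq1, hq2⟩ := exists_rat_btwn (show h y < g y - c by linarith)
      exact ⟨q, by linarith, le_of_lt hq1⟩
    · rintro ⟨q, h1, h2⟩
      linarith
  rw [key]
  exact sigmaTwo_iUnion fun q =>
    (AlgGen.basic _ (hg _)).inter (AlgGen.compl _ (AlgGen.basic _ (hh _)))

lemma max_split (a t : ℝ) : a * t = max a 0 * t - max (-a) 0 * t := by
  rcases le_total a 0 with h | h
  · rw [max_eq_right h, max_eq_left (by linarith)]; ring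
  · rw [max_eq_left h, max_eq_right (by linarith)]; ring

end PartE

/-- Let `K` be compact Hausdorff and `H ⊆ K` universally measurable,
and let `f̃(μ) = μ(H)` on `M¹(K)`. If `H` is resolvable then `f̃ ∈ Hf₁(M¹(K))`; if `H`
belongs to the algebra generated by the open sets then `f̃ ∈ Bof₁(M¹(K))`. -/

theorem statement4 {K : Type*} [TopologicalSpace K] [CompactSpace K] [T2Space K]
    [MeasurableSpace K] [BorelSpace K]
    (H : Set K) (hH : UnivMeasurableSet H) :
    (Resolvable H →
      HfClass (RadonProb K) 1 (fun μ : RadonProb K => (RadonProb.measure μ H).toReal)) ∧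
    (Bos K H →
      BofClass (RadonProb K) 1 (fun μ : RadonProb K => (RadonProb.measure μ H).toReal)) := by
  constructor
  · -- resolvable case
    intro hres
    refine FunHier.base _ ?_
    intro U hU
    exact sigmaTwo_preimage_open (fun p s => hs_Ioo hH hres p s) hU
  · -- Bos case
    intro hBos
    refine FunHier.base _ ?_
    intro U hU
    obtain ⟨L, hL, hrep⟩ := bos_rep hBos
    set Lpos : List (ℝ × Set K) := L.map fun p => (max p.1 0, p.2) with hLposdef
    set Lneg : List (ℝ × Set K) := L.map fun p => (max (-p.1) 0, p.2) with hLnegdef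
    have hLposOpen : ∀ p ∈ Lpos, IsOpen p.2 := by
      intro p hp
      obtain ⟨q, hq, rfl⟩ := List.mem_map.1 hp
      exact hL q hq
    have hLnegOpen : ∀ p ∈ Lneg, IsOpen p.2 := by
      intro p hp
      obtain ⟨q, hq, rfl⟩ := List.mem_map.1 hp
      exact hL q hq
    have hLposNN : ∀ p ∈ Lpos, 0 ≤ p.1 := by
      intro p hp
      obtain ⟨q, hq, rfl⟩ := List.mem_map.1 hp
      exact le_max_right _ _
    have hLnegNN : ∀ p ∈ Lneg, 0 ≤ p.1 := by
      intro p hp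
      obtain ⟨q, hq, rfl⟩ := List.mem_map.1 hp
      exact le_max_right _ _
    set g := fun ν : RadonProb K => (Lpos.map fun p => p.1 * (ν.measure p.2).toReal).sum
      with hgdef
    set h := fun ν : RadonProb K => (Lneg.map fun p => p.1 * (ν.measure p.2).toReal).sum
      with hhdef
    have hg' : ∀ ν : RadonProb K,
        g ν = (L.map fun p => max p.1 0 * (ν.measure p.2).toReal).sum := by
      intro ν
      rw [hgdef]
      simp only [hLposdef, List.map_map]
      rfl
    have hh' : ∀ ν : RadonProb K,
        h ν = (L.map fun p => max (-p.1) 0 * (ν.measure p.2).toReal).sum := by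
      intro ν
      rw [hhdef]
      simp only [hLnegdef, List.map_map]
      rfl
    have hsplit : ∀ ν : RadonProb K, (RadonProb.measure ν H).toReal = g ν - h ν := by
      intro ν
      rw [show RadonProb.measure ν = ν.measure from rfl, ftilde_eq_listval hH L hL hrep ν,
        hg' ν, hh' ν, ← list_sum_sub]
      congr 1
      apply List.map_congr_left
      intro p _
      exact max_split p.1 ((ν.measure p.2).toReal)
    have hglsc : ∀ c : ℝ, IsOpen {ν : RadonProb K | c < g ν} :=
      lsc_listval Lpos hLposOpen hLposNN
    have hhlsc : ∀ c : ℝ, IsOpen {ν : RadonProb K | c < h ν} :=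
      lsc_listval Lneg hLnegOpen hLnegNN
    refine sigmaTwo_preimage_open (G := fun s : Set (RadonProb K) => IsOpen s) ?_ hU
    intro p s
    have key : ((fun μ : RadonProb K => (RadonProb.measure μ H).toReal) ⁻¹'
        Ioo (p : ℝ) (s : ℝ)) =
        {ν : RadonProb K | (p : ℝ) < g ν - h ν} ∩
          {ν : RadonProb K | (-(s : ℝ)) < h ν - g ν} := by
      ext ν
      simp only [mem_preimage, mem_Ioo, mem_inter_iff, mem_setOf_eq, hsplit ν]
      constructor
      · rintro ⟨h1, h2⟩
        exact ⟨h1, by linarith⟩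
      · rintro ⟨h1, h2⟩
        exact ⟨h1, by linarith⟩
    rw [key]
    exact (sigmaTwo_lt_sub hglsc hhlsc (p : ℝ)).interAlg
      (sigmaTwo_lt_sub hhlsc hglsc (-(s : ℝ)))
end
end

section
/- Let X be a compact convex subset of a real locally convex Hausdorff space with ext X Lindelöf, and let f ∈ C_α(ext X) have values in [0,1], for some countable ordinal α. Then there exist a Baire set B ⊇ ext X in X and a function g ∈ C_α(B) such that g = f on ext X, 0 ≤ g ≤ 1 on B, and g(r(μ)) = ∫ g dμ for every Radon probability measure μ on X with μ(B) = 1 and r(μ) ∈ B. -/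
open MeasureTheory Filter Topology Set

noncomputable section

/-- The σ-algebra of Baire sets: the σ-algebra generated by the cozero sets. -/
def BaireSigma (X : Type*) [TopologicalSpace X] : MeasurableSpace X :=
  MeasurableSpace.generateFrom {s : Set X | ∃ g : X → ℝ, Continuous g ∧ s = {x | g x ≠ 0}}

/-- A Baire function: a member of some Baire class `C_α`, `α < ω₁`. -/
def IsBaireFun {X : Type*} [TopologicalSpace X] {Y : Type*} [TopologicalSpace Y]
    (f : X → Y) : Prop :=
  ∃ α : Ordinal.{0}, α < omega1 ∧ BaireClass X Y α f

/-- `x` is the barycenter of the probability measure `μ` on `X`: every continuous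
linear functional satisfies the barycentric formula. -/
def IsBarycenter {E : Type*} [AddCommGroup E] [Module ℝ E] [TopologicalSpace E]
    [MeasurableSpace E] (X : Set E) (μ : Measure ↥X) (x : ↥X) : Prop :=
  ∀ L : E →L[ℝ] ℝ, L (x : E) = ∫ y : ↥X, L (y : E) ∂μ

/-- A strongly affine real-valued function on `X`: universally measurable and
satisfying the barycentric formula for every Radon probability measure on `X`. -/
def StronglyAffine {E : Type*} [AddCommGroup E] [Module ℝ E] [TopologicalSpace E]
    [MeasurableSpace E] (X : Set E) (f : ↥X → ℝ) : Prop :=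
  (∀ μ : ProbabilityMeasure ↥X, μ.toMeasure.InnerRegular → AEMeasurable f μ.toMeasure) ∧
  ∀ μ : ProbabilityMeasure ↥X, μ.toMeasure.InnerRegular →
    ∀ x : ↥X, IsBarycenter X μ.toMeasure x → f x = ∫ y : ↥X, f y ∂μ.toMeasure


/-! ### Auxiliary development for Statement 11 -/

section Aux11

open scoped Classical

/-- Baire classes are stable under pre-composition with a continuous map. -/
theorem BaireClass.comp_continuous {W W' : Type*} [TopologicalSpace W] [TopologicalSpace W']
    {α : Ordinal.{0}} {f : W → ℝ} (hf : BaireClass W ℝ α f) {ψ : W' → W}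
    (hψ : Continuous ψ) : BaireClass W' ℝ α (fun w => f (ψ w)) := by
  induction hf with
  | base f hf => exact BaireClass.base _ (hf.comp hψ)
  | lim α β g f hβ hg htend ih =>
    exact BaireClass.lim α β (fun n w => g n (ψ w)) _ hβ ih (fun w => htend (ψ w))

/-- Baire classes are stable under post-composition with a continuous map. -/
theorem BaireClass.continuous_comp {W : Type*} [TopologicalSpace W]
    {α : Ordinal.{0}} {f : W → ℝ} (hf : BaireClass W ℝ α f) {ρ : ℝ → ℝ}
    (hρ : Continuous ρ) : BaireClass W ℝ α (fun w => ρ (f w)) := by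
  induction hf with
  | base f hf => exact BaireClass.base _ (hρ.comp hf)
  | lim α β g f hβ hg htend ih =>
    exact BaireClass.lim α β (fun n w => ρ (g n w)) _ hβ ih
      (fun w => (hρ.tendsto (f w)).comp (htend w))

/-- The Baire hierarchy generated by a given family of continuous functions. -/
inductive BIn {W : Type*} [TopologicalSpace W] (C : Set (W → ℝ)) :
    Ordinal.{0} → (W → ℝ) → Prop
  | base (f : W → ℝ) : f ∈ C → Continuous f → BIn C 0 f
  | lim (α : Ordinal.{0}) (β : ℕ → Ordinal.{0}) (g : ℕ → W → ℝ) (f : W → ℝ) :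
      (∀ n, β n < α) → (∀ n, BIn C (β n) (g n)) →
      (∀ x, Tendsto (fun n => g n x) atTop (𝓝 (f x))) → BIn C α f

theorem BIn.mono {W : Type*} [TopologicalSpace W] {C C' : Set (W → ℝ)} (hCC : C ⊆ C')
    {α : Ordinal.{0}} {f : W → ℝ} (hf : BIn C α f) : BIn C' α f := by
  induction hf with
  | base f hf hc => exact BIn.base f (hCC hf) hc
  | lim α β g f hβ hg htend ih => exact BIn.lim α β g f hβ ih htend

/-- Every Baire class function is generated by a countable family of continuous functions. -/
theorem exists_countable_BIn {W : Type*} [TopologicalSpace W]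
    {α : Ordinal.{0}} {f : W → ℝ} (hf : BaireClass W ℝ α f) :
    ∃ C : Set (W → ℝ), C.Countable ∧ (∀ h ∈ C, Continuous h) ∧ BIn C α f := by
  induction hf with
  | base f hf =>
    exact ⟨{f}, Set.countable_singleton f, by rintro h rfl; exact hf,
      BIn.base f rfl hf⟩
  | lim α β g f hβ hg htend ih =>
    choose C hC1 hC2 hC3 using ih
    refine ⟨⋃ n, C n, Set.countable_iUnion hC1, ?_, ?_⟩
    · intro h hh
      obtain ⟨n, hn⟩ := Set.mem_iUnion.1 hh
      exact hC2 n h hn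
    · exact BIn.lim α β g f hβ (fun n => (hC3 n).mono (Set.subset_iUnion C n)) htend

/-- Extending a measurable function on a measurable set by `0` yields a measurable function. -/
theorem measurable_extension {γ : Type*} [MeasurableSpace γ] {S : Set γ}
    (hS : MeasurableSet S) {G : γ → ℝ} (hGm : Measurable fun s : S => G (s : γ))
    (hG0 : ∀ y ∉ S, G y = 0) : Measurable G := by
  intro T hT
  have : G ⁻¹' T =
      (Subtype.val '' ((fun s : S => G (s : γ)) ⁻¹' T)) ∪ (if (0:ℝ) ∈ T then Sᶜ else ∅) := by
    ext y
    constructor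
    · intro hy
      by_cases hyS : y ∈ S
      · exact Or.inl ⟨⟨y, hyS⟩, hy, rfl⟩
      · refine Or.inr ?_
        rw [if_pos (by rw [← hG0 y hyS]; exact hy)]
        exact hyS
    · rintro (⟨⟨z, hz⟩, hz2, rfl⟩ | hy)
      · exact hz2
      · split_ifs at hy with h0
        · rwa [Set.mem_preimage, hG0 y hy]
        · exact absurd hy (Set.notMem_empty y)
  rw [this]
  refine (hS.subtype_image (hGm hT)).union ?_
  split_ifs
  · exact hS.compl
  · exact MeasurableSet.empty

/-- A continuous linear functional on `ℕ → ℝ` vanishes on sequences supported off a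
finite set. -/
theorem clm_pi_finite (ℓ : (ℕ → ℝ) →L[ℝ] ℝ) :
    ∃ I : Finset ℕ, ∀ y : ℕ → ℝ, (∀ i ∈ I, y i = 0) → ℓ y = 0 := by
  have h0 : IsOpen (ℓ ⁻¹' Set.Ioo (-1:ℝ) 1) := isOpen_Ioo.preimage ℓ.continuous
  have hmem : (0 : ℕ → ℝ) ∈ ℓ ⁻¹' Set.Ioo (-1:ℝ) 1 := by
    simp [Set.mem_Ioo]
  obtain ⟨I, u, hu, hsub⟩ := isOpen_pi_iff.1 h0 0 hmem
  refine ⟨I, fun y hy => ?_⟩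
  have key : ∀ r : ℝ, ℓ (r • y) ∈ Set.Ioo (-1:ℝ) 1 := by
    intro r
    apply hsub
    intro i hi
    have : (r • y) i = 0 := by simp [hy i hi]
    rw [this]
    exact (hu i hi).2
  by_contra hne
  have h2 := key (2 / |ℓ y|)
  rw [ℓ.map_smul, smul_eq_mul] at h2
  have habs : |ℓ y| > 0 := abs_pos.2 hne
  have : (2 / |ℓ y|) * ℓ y = 2 * (ℓ y / |ℓ y|) := by ring
  rcases le_or_gt 0 (ℓ y) with hpos | hneg
  · have he : (2 / |ℓ y|) * ℓ y = 2 := by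
      rw [abs_of_pos (lt_of_le_of_ne hpos (Ne.symm hne))]
      field_simp
    rw [he] at h2
    exact absurd h2.2 (by norm_num)
  · have he : (2 / |ℓ y|) * ℓ y = -2 := by
      rw [abs_of_neg hneg]
      field_simp
      try rw [div_neg, mul_div_assoc, div_self hne]
      try ring
    rw [he] at h2
    exact absurd h2.1 (by norm_num)

/-- A continuous linear functional on `ℕ → ℝ` is a finite linear combination of
coordinate evaluations. -/
theorem clm_pi_repr (ℓ : (ℕ → ℝ) →L[ℝ] ℝ) :
    ∃ I : Finset ℕ, ∀ y : ℕ → ℝ, ℓ y = ∑ i ∈ I, y i * ℓ (Pi.single i (1:ℝ) : ℕ → ℝ) := by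
  obtain ⟨I, hI⟩ := clm_pi_finite ℓ
  refine ⟨I, fun y => ?_⟩
  set ysum : ℕ → ℝ := ∑ i ∈ I, (y i) • (Pi.single i (1:ℝ) : ℕ → ℝ) with hysum
  have hyrest : ∀ j ∈ I, (y - ysum) j = 0 := by
    intro j hj
    have : ysum j = y j := by
      rw [hysum]
      rw [Finset.sum_apply]
      have : ∀ i ∈ I, (y i • (Pi.single i (1:ℝ) : ℕ → ℝ)) j = if i = j then y i else 0 := by
        intro i _
        by_cases hij : i = j
        · subst hij; simp
        · simp [Pi.single_apply, hij]
      rw [Finset.sum_congr rfl this, Finset.sum_ite_eq' I j y]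
      simp [hj]
    simp [this]
  have hsplit : ℓ y = ℓ ysum + ℓ (y - ysum) := by
    rw [← map_add]
    congr 1
    abel
  rw [hsplit, hI _ hyrest, add_zero, hysum, map_sum]
  refine Finset.sum_congr rfl fun i _ => ?_
  rw [ℓ.map_smul, smul_eq_mul]

/-- In a pseudometrizable space every open set is a cozero set. -/
theorem isOpen_eq_cozero {γ : Type*} [TopologicalSpace γ]
    [TopologicalSpace.PseudoMetrizableSpace γ] {U : Set γ} (hU : IsOpen U) :
    ∃ ρ : γ → ℝ, Continuous ρ ∧ U = {y | ρ y ≠ 0} := by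
  letI := TopologicalSpace.pseudoMetrizableSpacePseudoMetric γ
  rcases eq_or_ne U Set.univ with rfl | hne
  · exact ⟨fun _ => 1, continuous_const, by simp⟩
  have hUc : Uᶜ.Nonempty := by
    rw [Set.nonempty_compl]
    exact hne
  refine ⟨fun y => Metric.infDist y Uᶜ, Metric.continuous_infDist_pt _, ?_⟩
  ext y
  simp only [Set.mem_setOf_eq]
  rw [show (y ∈ U) = (y ∉ Uᶜ) by simp]
  rw [IsClosed.notMem_iff_infDist_pos (isClosed_compl_iff.2 hU) hUc]
  constructor
  · intro h; exact ne_of_gt h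
  · intro h
    exact lt_of_le_of_ne Metric.infDist_nonneg (Ne.symm h)

/-- Preimages of Borel sets under continuous maps into `ℕ → ℝ` are Baire sets. -/
theorem baire_preimage {K : Type*} [TopologicalSpace K] {ψ : K → ℕ → ℝ}
    (hψ : Continuous ψ) {S : Set (ℕ → ℝ)} (hS : MeasurableSet S) :
    MeasurableSet[BaireSigma K] (ψ ⁻¹' S) := by
  have hgen : @Measurable K (ℕ → ℝ) (BaireSigma K)
      (MeasurableSpace.generateFrom {s : Set (ℕ → ℝ) | IsOpen s}) ψ := by
    apply @measurable_generateFrom K (ℕ → ℝ) (BaireSigma K)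
    intro U hU
    have hU' : IsOpen U := hU
    obtain ⟨ρ, hρc, hρU⟩ := isOpen_eq_cozero hU'
    apply MeasurableSpace.measurableSet_generateFrom
    refine ⟨fun k => ρ (ψ k), hρc.comp hψ, ?_⟩
    rw [hρU]
    rfl
  have hS' : MeasurableSet[borel (ℕ → ℝ)] S :=
    BorelSpace.measurable_eq (α := ℕ → ℝ) ▸ hS
  exact hgen hS'


section Geometry

variable {E : Type*} [AddCommGroup E] [Module ℝ E] [TopologicalSpace E]
    [IsTopologicalAddGroup E] [ContinuousSMul ℝ E] [LocallyConvexSpace ℝ E] [T2Space E]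
    {X : Set E}

/-- Two points agreeing under all continuous linear functionals are equal. -/
theorem eq_of_forall_clm_eq {a b : E} (h : ∀ l : E →L[ℝ] ℝ, l a = l b) : a = b := by
  by_contra hne
  obtain ⟨l, hl⟩ := geometric_hahn_banach_point_point hne
  exact absurd (h l) (ne_of_lt hl)

/-- Local basis of finite cylinders determined by continuous linear functionals,
relative to a compact set. -/
theorem cylinder_basis (hXc : IsCompact X) {V : Set E} (hV : IsOpen V) {x : E}
    (hxV : x ∈ V) :
    ∃ (F : Finset (E →L[ℝ] ℝ)) (δ : ℝ), 0 < δ ∧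
      ∀ z ∈ X, (∀ l ∈ F, |l z - l x| < δ) → z ∈ V := by
  have hC : IsCompact (X \ V) := hXc.diff hV
  have hsep : ∀ z : ↥(X \ V), ∃ l : E →L[ℝ] ℝ, l (z : E) < l x := fun z =>
    geometric_hahn_banach_point_point (fun h : (z : E) = x => z.2.2 (h ▸ hxV))
  choose l hl using hsep
  set Wop : ↥(X \ V) → Set E := fun z =>
    {w : E | |l z w - l z (z : E)| < (l z x - l z (z : E)) / 3} with hWop
  have hWopen : ∀ z, IsOpen (Wop z) := by
    intro z
    have : Wop z = (fun w => |l z w - l z (z : E)|) ⁻¹' Set.Iio ((l z x - l z (z : E)) / 3) := rfl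
    rw [this]
    exact isOpen_Iio.preimage (continuous_abs.comp ((l z).continuous.sub continuous_const))
  have hcover : X \ V ⊆ ⋃ z : ↥(X \ V), Wop z := by
    intro w hw
    refine Set.mem_iUnion.2 ⟨⟨w, hw⟩, ?_⟩
    simp only [hWop, Set.mem_setOf_eq, sub_self, abs_zero]
    have := hl ⟨w, hw⟩
    linarith
  obtain ⟨t, ht⟩ := hC.elim_finite_subcover Wop hWopen hcover
  rcases t.eq_empty_or_nonempty with rfl | htne
  · refine ⟨∅, 1, one_pos, fun z hzX _ => ?_⟩
    by_contra hzV
    have := ht ⟨hzX, hzV⟩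
    simp at this
  · refine ⟨t.image l, t.inf' htne (fun z => (l z x - l z (z : E)) / 3), ?_, ?_⟩
    · rw [Finset.lt_inf'_iff]
      intro z _
      have := hl z
      linarith
    · intro z hzX hcyl
      by_contra hzV
      obtain ⟨i, hit, hiz⟩ := Set.mem_iUnion₂.1 (ht ⟨hzX, hzV⟩)
      have h1 : |l i z - l i (i : E)| < (l i x - l i (i : E)) / 3 := hiz
      have h2 : |l i z - l i x| < (l i x - l i (i : E)) / 3 := by
        have hle : t.inf' htne (fun z => (l z x - l z (z : E)) / 3) ≤
            (l i x - l i (i : E)) / 3 := Finset.inf'_le _ hit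
        exact lt_of_lt_of_le (hcyl (l i) (Finset.mem_image_of_mem l hit)) hle
      have h3 : |l i x - l i (i : E)| ≤ |l i x - l i z| + |l i z - l i (i : E)| :=
        abs_sub_le _ _ _
      rw [abs_sub_comm (l i x) (l i z)] at h3
      have h4 : |l i x - l i (i : E)| = l i x - l i (i : E) := abs_of_pos (by linarith [hl i])
      linarith [hl i]

/-- The set of points admitting a "two-point representation" matching the functionals in `F`
whose `l₀`-variance is at least `η`. -/
def VarBad (X : Set E) (F : Finset (E →L[ℝ] ℝ)) (l₀ : E →L[ℝ] ℝ) (η : ℝ) : Set E :=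
  {w | ∃ x₁ ∈ X, ∃ x₂ ∈ X, ∃ t ∈ Set.Icc (0:ℝ) 1,
    (∀ l ∈ F, t * l x₁ + (1-t) * l x₂ = l w) ∧
    η ≤ t * (l₀ x₁)^2 + (1-t) * (l₀ x₂)^2 - (l₀ w)^2}

theorem isClosed_varBad (hXc : IsCompact X) (F : Finset (E →L[ℝ] ℝ))
    (l₀ : E →L[ℝ] ℝ) (η : ℝ) : IsClosed (VarBad X F l₀ η) := by
  haveI : CompactSpace ↥X := isCompact_iff_compactSpace.mp hXc
  haveI : CompactSpace ↥(Set.Icc (0:ℝ) 1) := isCompact_iff_compactSpace.mp isCompact_Icc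
  set A := ↥X × ↥X × ↥(Set.Icc (0:ℝ) 1)
  have hc1 : Continuous fun p : A × E => ((p.1.1 : E)) := by dsimp only [A]; fun_prop
  have hc2 : Continuous fun p : A × E => ((p.1.2.1 : E)) := by dsimp only [A]; fun_prop
  have hct : Continuous fun p : A × E => ((p.1.2.2 : ℝ)) := by dsimp only [A]; fun_prop
  have hcw : Continuous fun p : A × E => p.2 := by fun_prop
  set T : Set (A × E) :=
    (⋂ l ∈ F, {p : A × E | (p.1.2.2 : ℝ) * l (p.1.1 : E) +
        (1 - (p.1.2.2 : ℝ)) * l (p.1.2.1 : E) = l p.2}) ∩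
      {p : A × E | η ≤ (p.1.2.2 : ℝ) * (l₀ (p.1.1 : E))^2 +
        (1 - (p.1.2.2 : ℝ)) * (l₀ (p.1.2.1 : E))^2 - (l₀ p.2)^2} with hT
  have hTclosed : IsClosed T := by
    refine IsClosed.inter (isClosed_biInter fun l _ => ?_) ?_
    · exact isClosed_eq (by dsimp only [A]; fun_prop) (l.continuous.comp hcw)
    · exact isClosed_le continuous_const (by dsimp only [A]; fun_prop)
  have himg : VarBad X F l₀ η = Prod.snd '' T := by
    ext w
    constructor
    · rintro ⟨x₁, hx₁, x₂, hx₂, t, ht, hmatch, hvar⟩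
      exact ⟨((⟨x₁, hx₁⟩, ⟨x₂, hx₂⟩, ⟨t, ht⟩), w),
        ⟨Set.mem_biInter fun l hl => hmatch l hl, hvar⟩, rfl⟩
    · rintro ⟨⟨⟨x₁, x₂, t⟩, w'⟩, ⟨hmatch, hvar⟩, rfl⟩
      exact ⟨x₁, x₁.2, x₂, x₂.2, t, t.2,
        fun l hl => Set.mem_iInter₂.1 hmatch l hl, hvar⟩
  rw [himg]
  exact isClosedMap_snd_of_compactSpace T hTclosed

theorem stage_lemma (hXc : IsCompact X) (hLind : IsLindelof (X.extremePoints ℝ))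
    (l₀ : E →L[ℝ] ℝ) (η : ℝ) (hη : 0 < η) :
    ∃ S : Set (E →L[ℝ] ℝ), S.Countable ∧ ∀ e ∈ X.extremePoints ℝ,
      ∃ F : Finset (E →L[ℝ] ℝ), ↑F ⊆ S ∧ e ∉ VarBad X F l₀ η := by
  have hcov : ∀ e ∈ X.extremePoints ℝ, ∃ F : Finset (E →L[ℝ] ℝ), e ∉ VarBad X F l₀ η := by
    intro e he
    by_contra hbad
    push_neg at hbad
    haveI : CompactSpace ↥X := isCompact_iff_compactSpace.mp hXc
    haveI : CompactSpace ↥(Set.Icc (0:ℝ) 1) := isCompact_iff_compactSpace.mp isCompact_Icc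
    set A := ↥X × ↥X × ↥(Set.Icc (0:ℝ) 1)
    set K : Finset (E →L[ℝ] ℝ) → Set A := fun F =>
      (⋂ l ∈ F, {p : A | (p.2.2 : ℝ) * l (p.1 : E) +
          (1 - (p.2.2 : ℝ)) * l (p.2.1 : E) = l e}) ∩
        {p : A | η ≤ (p.2.2 : ℝ) * (l₀ (p.1 : E))^2 +
          (1 - (p.2.2 : ℝ)) * (l₀ (p.2.1 : E))^2 - (l₀ e)^2} with hK
    have hKclosed : ∀ F, IsClosed (K F) := by
      intro F
      refine IsClosed.inter (isClosed_biInter fun l _ => ?_) ?_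
      · exact isClosed_eq (by dsimp only [A]; fun_prop) continuous_const
      · exact isClosed_le continuous_const (by dsimp only [A]; fun_prop)
    have hKne : ∀ F, (K F).Nonempty := by
      intro F
      obtain ⟨x₁, hx₁, x₂, hx₂, t, ht, hmatch, hvar⟩ := hbad F
      exact ⟨(⟨x₁, hx₁⟩, ⟨x₂, hx₂⟩, ⟨t, ht⟩),
        Set.mem_biInter fun l hl => hmatch l hl, hvar⟩
    have hKdir : Directed (· ⊇ ·) K := by
      intro F F'
      refine ⟨F ∪ F', ?_, ?_⟩
      · intro p hp
        exact ⟨Set.mem_biInter fun l hl =>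
          Set.mem_iInter₂.1 hp.1 l (Finset.mem_union_left _ hl), hp.2⟩
      · intro p hp
        exact ⟨Set.mem_biInter fun l hl =>
          Set.mem_iInter₂.1 hp.1 l (Finset.mem_union_right _ hl), hp.2⟩
    obtain ⟨p, hp⟩ := IsCompact.nonempty_iInter_of_directed_nonempty_isCompact_isClosed
      K hKdir hKne (fun F => (hKclosed F).isCompact) hKclosed
    obtain ⟨⟨x₁, hx₁⟩, ⟨x₂, hx₂⟩, ⟨t, ht⟩⟩ := p
    have hall : ∀ l : E →L[ℝ] ℝ, t * l x₁ + (1-t) * l x₂ = l e := by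
      intro l
      have := Set.mem_iInter.1 hp {l}
      exact Set.mem_iInter₂.1 this.1 l (Finset.mem_singleton_self l)
    have hvar : η ≤ t * (l₀ x₁)^2 + (1-t) * (l₀ x₂)^2 - (l₀ e)^2 :=
      (Set.mem_iInter.1 hp ∅).2
    have hcomb : t • x₁ + (1-t) • x₂ = e := by
      apply eq_of_forall_clm_eq
      intro l
      rw [map_add, l.map_smul, l.map_smul, smul_eq_mul, smul_eq_mul]
      exact hall l
    have hvar0 : t * (l₀ x₁)^2 + (1-t) * (l₀ x₂)^2 - (l₀ e)^2 = 0 := by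
      rcases eq_or_lt_of_le ht.1 with h0 | h0
      · -- t = 0
        have hx2e : x₂ = e := by
          apply eq_of_forall_clm_eq
          intro l
          have := hall l
          rw [← h0] at this
          linarith
        rw [← h0, hx2e]
        ring
      rcases eq_or_lt_of_le ht.2 with h1 | h1
      · -- t = 1
        have hx1e : x₁ = e := by
          apply eq_of_forall_clm_eq
          intro l
          have := hall l
          rw [h1] at this
          linarith
        rw [h1, hx1e]
        ring
      · -- 0 < t < 1
        have hseg : e ∈ openSegment ℝ x₁ x₂ :=
          ⟨t, 1-t, h0, by linarith, by ring, hcomb⟩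
        obtain ⟨he1, he2⟩ := (mem_extremePoints.1 he).2 x₁ hx₁ x₂ hx₂ hseg
        rw [he1, he2]
        ring
    linarith
  choose Fe hFe using hcov
  have hnhds : ∀ (e : E) (he : e ∈ X.extremePoints ℝ),
      (VarBad X (Fe e he) l₀ η)ᶜ ∈ 𝓝 e :=
    fun e he => ((isClosed_varBad hXc _ _ _).isOpen_compl).mem_nhds (hFe e he)
  obtain ⟨tset, htc, htcov⟩ := hLind.elim_nhds_subcover'
    (fun e he => (VarBad X (Fe e he) l₀ η)ᶜ) hnhds
  refine ⟨⋃ e ∈ tset, ↑(Fe (e : E) e.2), htc.biUnion fun e _ => (Fe _ _).countable_toSet, ?_⟩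
  intro e he
  obtain ⟨e₀, he₀, hmem⟩ := Set.mem_iUnion₂.1 (htcov he)
  exact ⟨Fe (e₀ : E) e₀.2, fun l hl => Set.mem_biUnion he₀ hl, hmem⟩

theorem closing_lemma (hXc : IsCompact X) (hLind : IsLindelof (X.extremePoints ℝ))
    (Q₀ : Set (E →L[ℝ] ℝ)) (hQ₀ : Q₀.Countable) :
    ∃ Q : Set (E →L[ℝ] ℝ), Q₀ ⊆ Q ∧ Q.Countable ∧
      ∀ e ∈ X.extremePoints ℝ, ∀ x₁ ∈ X, ∀ x₂ ∈ X, ∀ t ∈ Set.Icc (0:ℝ) 1,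
        (∀ l ∈ Q, t * l x₁ + (1-t) * l x₂ = l e) →
        ∀ l₀ ∈ Q, t * (l₀ x₁)^2 + (1-t) * (l₀ x₂)^2 = (l₀ e)^2 := by
  have hstage := fun (l₀ : E →L[ℝ] ℝ) (k : ℕ) =>
    stage_lemma hXc hLind l₀ (1/(k+1)) (by positivity)
  choose S hSc hSp using hstage
  set Qn : ℕ → Set (E →L[ℝ] ℝ) :=
    fun n => Nat.rec Q₀ (fun _ Q => Q ∪ ⋃ l₀ ∈ Q, ⋃ k, S l₀ k) n with hQn
  have hQnc : ∀ n, (Qn n).Countable := by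
    intro n
    induction n with
    | zero => exact hQ₀
    | succ n ih =>
      exact ih.union (ih.biUnion fun l₀ _ => Set.countable_iUnion fun k => hSc l₀ k)
  refine ⟨⋃ n, Qn n, Set.subset_iUnion Qn 0, Set.countable_iUnion hQnc, ?_⟩
  intro e he x₁ hx₁ x₂ hx₂ t ht hmatch l₀ hl₀
  obtain ⟨n, hn⟩ := Set.mem_iUnion.1 hl₀
  have hvar_lt : ∀ k : ℕ,
      t * (l₀ x₁)^2 + (1-t) * (l₀ x₂)^2 - (l₀ e)^2 < 1/(k+1) := by
    intro k
    obtain ⟨F, hFS, hFnot⟩ := hSp l₀ k e he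
    have hFQ : (F : Set (E →L[ℝ] ℝ)) ⊆ ⋃ n, Qn n := by
      refine hFS.trans fun l hl => Set.mem_iUnion.2 ⟨n+1, Or.inr ?_⟩
      exact Set.mem_biUnion hn (Set.mem_iUnion.2 ⟨k, hl⟩)
    by_contra hge
    push_neg at hge
    exact hFnot ⟨x₁, hx₁, x₂, hx₂, t, ht, fun l hl => hmatch l (hFQ hl), hge⟩
  have hvar0 : t * (l₀ x₁)^2 + (1-t) * (l₀ x₂)^2 - (l₀ e)^2 ≤ 0 := by
    by_contra hpos
    push_neg at hpos
    obtain ⟨k, hk⟩ := exists_nat_one_div_lt hpos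
    exact absurd (hvar_lt k) (not_lt.2 hk.le)
  have hle := hmatch l₀ (Set.mem_iUnion.2 ⟨n, hn⟩)
  have hvar_ge : 0 ≤ t * (l₀ x₁)^2 + (1-t) * (l₀ x₂)^2 - (l₀ e)^2 := by
    rw [← hle]
    nlinarith [sq_nonneg (l₀ x₁ - l₀ x₂), ht.1, ht.2,
      mul_nonneg (mul_nonneg ht.1 (sub_nonneg.2 ht.2)) (sq_nonneg (l₀ x₁ - l₀ x₂))]
  linarith

theorem fact1_single (hXc : IsCompact X) (hLind : IsLindelof (X.extremePoints ℝ))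
    (h : ↥(X.extremePoints ℝ) → ℝ) (hc : Continuous h) (p q : ℝ) :
    ∃ Qh : Set (E →L[ℝ] ℝ), Qh.Countable ∧
      ∀ x : ↥(X.extremePoints ℝ), h x ∈ Set.Ioo p q →
        ∃ F : Finset (E →L[ℝ] ℝ), ↑F ⊆ Qh ∧ ∃ δ : ℝ, 0 < δ ∧
          ∀ z : ↥(X.extremePoints ℝ),
            (∀ l ∈ F, |l (z : E) - l (x : E)| < δ) → h z ∈ Set.Ioo p q := by
  rcases le_or_gt q p with hqp | hpq
  · exact ⟨∅, Set.countable_empty, fun x hx => absurd hx (by simp [Set.Ioo_eq_empty_iff.2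
      (fun hlt => absurd hqp (not_le.2 hlt))])⟩
  have hεX : X.extremePoints ℝ ⊆ X := extremePoints_subset
  -- the open preimage as a relatively open set
  obtain ⟨V₀, hV₀open, hV₀⟩ : ∃ V₀ : Set E, IsOpen V₀ ∧
      Subtype.val ⁻¹' V₀ = h ⁻¹' Set.Ioo p q := by
    have : IsOpen (h ⁻¹' Set.Ioo p q) := isOpen_Ioo.preimage hc
    rwa [isOpen_induced_iff] at this
  -- closed shrinking pieces
  set d : ℕ → ℝ := fun n => (q - p)/(n+3) with hd
  have hdpos : ∀ n, 0 < d n := fun n => div_pos (by linarith) (by positivity)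
  obtain ⟨D, hDclosed, hD⟩ : ∃ D : ℕ → Set E, (∀ n, IsClosed (D n)) ∧
      ∀ n, Subtype.val ⁻¹' (D n) = h ⁻¹' Set.Icc (p + d n) (q - d n) := by
    have hcl : ∀ n : ℕ, IsClosed (h ⁻¹' Set.Icc (p + d n) (q - d n)) :=
      fun n => isClosed_Icc.preimage hc
    have := fun n => (isClosed_induced_iff.1 (hcl n))
    choose D hD1 hD2 using this
    exact ⟨D, hD1, hD2⟩
  have hkey : ∀ (n : ℕ) (x : E), x ∈ X.extremePoints ℝ ∩ D n →
      ∃ (F : Finset (E →L[ℝ] ℝ)) (δ : ℝ), 0 < δ ∧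
        ∀ z ∈ X, (∀ l ∈ F, |l z - l x| < δ) → z ∈ V₀ := by
    intro n x hx
    have hxV₀ : x ∈ V₀ := by
      have hmem : (⟨x, hx.1⟩ : ↥(X.extremePoints ℝ)) ∈ h ⁻¹' Set.Icc (p + d n) (q - d n) := by
        rw [← hD n]
        exact hx.2
      have : h ⟨x, hx.1⟩ ∈ Set.Ioo p q := by
        have hdn := hdpos n
        exact ⟨by linarith [hmem.1], by linarith [hmem.2]⟩
      have h2 : (⟨x, hx.1⟩ : ↥(X.extremePoints ℝ)) ∈ Subtype.val ⁻¹' V₀ := by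
        rw [hV₀]; exact this
      exact h2
    obtain ⟨F, δ, hδ, hF⟩ := cylinder_basis hXc hV₀open hxV₀
    exact ⟨F, δ, hδ, hF⟩
  choose F δ hδ hF using hkey
  set N : ∀ (n : ℕ) (x : E), x ∈ X.extremePoints ℝ ∩ D n → Set E := fun n x hx =>
    ⋂ l ∈ F n x hx, {w : E | |l w - l x| < δ n x hx / 2} with hN
  have hNopen : ∀ n x hx, IsOpen (N n x hx) := by
    intro n x hx
    refine isOpen_biInter_finset fun l _ => ?_
    have : {w : E | |l w - l x| < δ n x hx / 2} =
        (fun w => |l w - l x|) ⁻¹' Set.Iio (δ n x hx / 2) := rfl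
    rw [this]
    exact isOpen_Iio.preimage (continuous_abs.comp (l.continuous.sub continuous_const))
  have hNmem : ∀ n x hx, x ∈ N n x hx := by
    intro n x hx
    refine Set.mem_iInter₂.2 fun l _ => ?_
    simp only [Set.mem_setOf_eq, sub_self, abs_zero]
    linarith [hδ n x hx]
  have hsubcov : ∀ n : ℕ, ∃ tset : Set ↥(X.extremePoints ℝ ∩ D n), tset.Countable ∧
      X.extremePoints ℝ ∩ D n ⊆ ⋃ x ∈ tset, N n (x : E) x.2 := by
    intro n
    exact (hLind.inter_right (hDclosed n)).elim_nhds_subcover' (fun x hx => N n x hx)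
      (fun x hx => (hNopen n x hx).mem_nhds (hNmem n x hx))
  choose tset htc htcov using hsubcov
  refine ⟨⋃ n, ⋃ x ∈ tset n, ↑(F n (x : E) x.2),
    Set.countable_iUnion fun n => (htc n).biUnion fun x _ => (F n _ _).countable_toSet, ?_⟩
  intro x hx
  -- find an appropriate piece
  have hm : 0 < min (h x - p) (q - h x) := lt_min (by linarith [hx.1]) (by linarith [hx.2])
  obtain ⟨n, hn⟩ := exists_nat_one_div_lt (div_pos hm (by linarith : (0:ℝ) < q - p))
  have hdn : d n < min (h x - p) (q - h x) := by
    have h1 : d n = (q - p) * (1/(n+3)) := by rw [hd]; ring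
    have h2 : (1:ℝ)/(n+3) ≤ 1/(n+1) := by
      apply div_le_div_of_nonneg_left one_pos.le (by positivity)
      push_cast; linarith
    have h3 : (q - p) * (1/(n+1)) < min (h x - p) (q - h x) := by
      rw [mul_comm]
      exact (lt_div_iff₀ (by linarith)).1 hn
    calc d n ≤ (q - p) * (1/(n+1)) := by rw [h1]; nlinarith [hpq, h2]
    _ < min (h x - p) (q - h x) := h3
  have hxD : (x : E) ∈ X.extremePoints ℝ ∩ D n := by
    refine ⟨x.2, ?_⟩
    have : x ∈ Subtype.val ⁻¹' (D n) := by
      rw [hD n]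
      constructor
      · have := min_le_left (h x - p) (q - h x); linarith
      · have := min_le_right (h x - p) (q - h x); linarith
    exact this
  obtain ⟨x₀, hx₀t, hx₀mem⟩ := Set.mem_iUnion₂.1 (htcov n hxD)
  refine ⟨F n (x₀ : E) x₀.2,
    fun l hl => Set.mem_iUnion.2 ⟨n, Set.mem_biUnion hx₀t hl⟩,
    δ n (x₀ : E) x₀.2 / 2, by linarith [hδ n (x₀ : E) x₀.2], ?_⟩
  intro z hcyl
  have hzV₀ : (z : E) ∈ V₀ := by
    apply hF n (x₀ : E) x₀.2 (z : E) (hεX z.2)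
    intro l hl
    have h1 : |l (x : E) - l (x₀ : E)| < δ n (x₀ : E) x₀.2 / 2 :=
      Set.mem_iInter₂.1 hx₀mem l hl
    have h2 := hcyl l hl
    calc |l (z : E) - l (x₀ : E)|
        ≤ |l (z : E) - l (x : E)| + |l (x : E) - l (x₀ : E)| := abs_sub_le _ _ _
      _ < δ n (x₀ : E) x₀.2 := by linarith
  have : z ∈ Subtype.val ⁻¹' V₀ := hzV₀
  rw [hV₀] at this
  exact this

theorem fact1 (hXc : IsCompact X) (hLind : IsLindelof (X.extremePoints ℝ))
    (C : Set (↥(X.extremePoints ℝ) → ℝ)) (hCc : C.Countable)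
    (hCcont : ∀ h ∈ C, Continuous h) :
    ∃ Q : Set (E →L[ℝ] ℝ), Q.Countable ∧
      ∀ h ∈ C, ∀ p q : ℚ, ∀ x : ↥(X.extremePoints ℝ), h x ∈ Set.Ioo (p:ℝ) (q:ℝ) →
        ∃ F : Finset (E →L[ℝ] ℝ), ↑F ⊆ Q ∧ ∃ δ : ℝ, 0 < δ ∧
          ∀ z : ↥(X.extremePoints ℝ),
            (∀ l ∈ F, |l (z : E) - l (x : E)| < δ) → h z ∈ Set.Ioo (p:ℝ) (q:ℝ) := by
  haveI : Countable ↥C := hCc.to_subtype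
  have hsingle := fun (c : ↥C) (p q : ℚ) =>
    fact1_single hXc hLind (c : ↥(X.extremePoints ℝ) → ℝ) (hCcont c c.2) (p:ℝ) (q:ℝ)
  choose QF hQFc hQFp using hsingle
  refine ⟨⋃ (c : ↥C) (p : ℚ) (q : ℚ), QF c p q,
    Set.countable_iUnion fun c => Set.countable_iUnion fun p =>
      Set.countable_iUnion fun q => hQFc c p q, ?_⟩
  intro h hh p q x hx
  obtain ⟨F, hFQ, δ, hδ, hprop⟩ := hQFp ⟨h, hh⟩ p q x hx
  refine ⟨F, hFQ.trans ?_, δ, hδ, hprop⟩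
  intro l hl
  exact Set.mem_iUnion.2 ⟨⟨h, hh⟩, Set.mem_iUnion.2 ⟨p, Set.mem_iUnion.2 ⟨q, hl⟩⟩⟩

end Geometry


section PiSide

/-- The extreme points of a compact convex subset of `ℕ → ℝ` form a Borel set. -/
theorem measurableSet_extremePoints_pi {Y : Set (ℕ → ℝ)} (hYcomp : IsCompact Y)
    (hYconv : Convex ℝ Y) : MeasurableSet (Y.extremePoints ℝ) := by
  set Fmk : ℕ → ℕ → Set (ℕ → ℝ) := fun m k =>
    (fun pr : (ℕ → ℝ) × (ℕ → ℝ) => (2⁻¹ : ℝ) • pr.1 + (2⁻¹ : ℝ) • pr.2) ''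
      {pr : (ℕ → ℝ) × (ℕ → ℝ) | pr.1 ∈ Y ∧ pr.2 ∈ Y ∧
        1/(k+1) ≤ |pr.1 m - pr.2 m|} with hFmk
  have hFcomp : ∀ m k, IsCompact (Fmk m k) := by
    intro m k
    apply IsCompact.image
    · have hsub : {pr : (ℕ → ℝ) × (ℕ → ℝ) | pr.1 ∈ Y ∧ pr.2 ∈ Y ∧
          1/(k+1) ≤ |pr.1 m - pr.2 m|} =
          (Y ×ˢ Y) ∩ {pr : (ℕ → ℝ) × (ℕ → ℝ) | 1/(k+1) ≤ |pr.1 m - pr.2 m|} := by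
        ext pr; simp [Set.mem_prod]; tauto
      rw [hsub]
      apply (hYcomp.prod hYcomp).inter_right
      apply isClosed_le continuous_const
      exact continuous_abs.comp (((continuous_apply m).comp continuous_fst).sub
        ((continuous_apply m).comp continuous_snd))
    · fun_prop
  have heq : Y.extremePoints ℝ = Y \ ⋃ m, ⋃ k, Fmk m k := by
    ext y
    constructor
    · intro hy
      refine ⟨hy.1, ?_⟩
      intro hmem
      obtain ⟨m, hm⟩ := Set.mem_iUnion.1 hmem
      obtain ⟨k, hk⟩ := Set.mem_iUnion.1 hm
      obtain ⟨⟨u, v⟩, ⟨huY, hvY, hd⟩, huv⟩ := hk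
      have hseg : y ∈ openSegment ℝ u v :=
        ⟨2⁻¹, 2⁻¹, by norm_num, by norm_num, by norm_num, huv⟩
      obtain ⟨hu, hv⟩ := (mem_extremePoints.1 hy).2 u huY v hvY hseg
      rw [hu, hv, sub_self, abs_zero] at hd
      have : (0:ℝ) < 1/(k+1) := by positivity
      linarith
    · rintro ⟨hyY, hyn⟩
      refine mem_extremePoints.2 ⟨hyY, ?_⟩
      intro y₁ hy₁ y₂ hy₂ hseg
      obtain ⟨a, b, ha, hb, hab, heq⟩ := hseg
      by_cases hy12 : y₁ = y₂
      · subst hy12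
        have hy : y = y₁ := by
          rw [← heq, ← add_smul, hab, one_smul]
        exact ⟨hy.symm, hy.symm⟩
      exfalso
      apply hyn
      have hkey : ∃ u v : ℕ → ℝ, u ∈ Y ∧ v ∈ Y ∧ u ≠ v ∧
          (2⁻¹ : ℝ) • u + (2⁻¹ : ℝ) • v = y := by
        rcases le_or_gt a 2⁻¹ with ha2 | ha2
        · refine ⟨(2*a) • y₁ + (1-2*a) • y₂, y₂, ?_, hy₂, ?_, ?_⟩
          · exact hYconv hy₁ hy₂ (by linarith) (by linarith) (by ring)
          · intro hne
            have h2 : (2*a) • (y₁ - y₂) = (0 : ℕ → ℝ) := by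
              have : (2*a) • y₁ + (1-2*a) • y₂ - y₂ = (2*a) • (y₁ - y₂) := by module
              rw [← this, hne, sub_self]
            rcases smul_eq_zero.1 h2 with h | h
            · have : (0:ℝ) < 2*a := by linarith
              rw [h] at this; exact absurd this (lt_irrefl 0)
            · exact hy12 (sub_eq_zero.1 h)
          · rw [← heq]
            have hb' : b = 1 - a := by linarith
            rw [hb']
            module
        · refine ⟨y₁, (2*a-1) • y₁ + (2-2*a) • y₂, hy₁, ?_, ?_, ?_⟩
          · exact hYconv hy₁ hy₂ (by linarith) (by linarith) (by ring)
          · intro hne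
            have h2 : (2-2*a) • (y₁ - y₂) = (0 : ℕ → ℝ) := by
              have : y₁ - ((2*a-1) • y₁ + (2-2*a) • y₂) = (2-2*a) • (y₁ - y₂) := by module
              rw [← this, ← hne, sub_self]
            rcases smul_eq_zero.1 h2 with h | h
            · have hb1 : a < 1 := by linarith
              have : (0:ℝ) < 2-2*a := by linarith
              rw [h] at this; exact absurd this (lt_irrefl 0)
            · exact hy12 (sub_eq_zero.1 h)
          · rw [← heq]
            have hb' : b = 1 - a := by linarith
            rw [hb']
            module
      obtain ⟨u, v, huY, hvY, huv, hmid⟩ := hkey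
      obtain ⟨m, hm⟩ := Function.ne_iff.1 huv
      have habs : 0 < |u m - v m| := abs_pos.2 (sub_ne_zero.2 hm)
      obtain ⟨k, hk⟩ := exists_nat_one_div_lt habs
      exact Set.mem_iUnion.2 ⟨m, Set.mem_iUnion.2 ⟨k,
        ⟨(u, v), ⟨huY, hvY, hk.le⟩, hmid⟩⟩⟩
  rw [heq]
  exact hYcomp.isClosed.measurableSet.diff
    (MeasurableSet.iUnion fun m => MeasurableSet.iUnion fun k =>
      (hFcomp m k).isClosed.measurableSet)

/-- A normalized restricted barycenter of a measure carried by a compact convex set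
belongs to that set. -/
theorem restricted_barycenter_mem {Y : Set (ℕ → ℝ)} (hYcomp : IsCompact Y)
    (hYconv : Convex ℝ Y) (ρ : Measure (ℕ → ℝ)) [IsFiniteMeasure ρ]
    (hρY : ρ Yᶜ = 0) (hρ0 : ρ Set.univ ≠ 0)
    (hint : ∀ m, Integrable (fun y => y m) ρ) :
    (fun m => (∫ y, y m ∂ρ) / (ρ Set.univ).toReal) ∈ Y := by
  have hd : 0 < (ρ Set.univ).toReal :=
    ENNReal.toReal_pos hρ0 (measure_ne_top ρ _)
  by_contra hc
  obtain ⟨ℓ, u, hu, huc⟩ :=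
    geometric_hahn_banach_closed_point hYconv hYcomp.isClosed hc
  obtain ⟨I, hI⟩ := clm_pi_repr ℓ
  have hae : ∀ᵐ y ∂ρ, y ∈ Y := by
    rw [ae_iff]
    exact hρY
  have hℓint : Integrable (fun y => ℓ y) ρ := by
    have : (fun y => ℓ y) = fun y => ∑ i ∈ I, y i * ℓ (Pi.single i (1:ℝ) : ℕ → ℝ) :=
      funext hI
    rw [this]
    exact integrable_finset_sum I fun i _ => (hint i).mul_const _
  have hcalc : ℓ (fun m => (∫ y, y m ∂ρ) / (ρ Set.univ).toReal) =
      (∫ y, ℓ y ∂ρ) / (ρ Set.univ).toReal := by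
    rw [hI]
    have h1 : ∫ y, ℓ y ∂ρ = ∑ i ∈ I, (∫ y, y i ∂ρ) * ℓ (Pi.single i (1:ℝ) : ℕ → ℝ) := by
      have : (fun y => ℓ y) = fun y => ∑ i ∈ I, y i * ℓ (Pi.single i (1:ℝ) : ℕ → ℝ) :=
        funext hI
      rw [this, integral_finset_sum I fun i _ => (hint i).mul_const _]
      exact Finset.sum_congr rfl fun i _ => integral_mul_const _ _
    rw [h1, Finset.sum_div]
    exact Finset.sum_congr rfl fun i _ => by ring
  have hle : ∫ y, ℓ y ∂ρ ≤ u * (ρ Set.univ).toReal := by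
    have h2 : ∫ y, (u:ℝ) ∂ρ = u * (ρ Set.univ).toReal := by
      rw [integral_const, smul_eq_mul, measureReal_def]; ring
    rw [← h2]
    apply integral_mono_ae hℓint (integrable_const u)
    filter_upwards [hae] with y hy
    exact (hu y hy).le
  have : ℓ (fun m => (∫ y, y m ∂ρ) / (ρ Set.univ).toReal) ≤ u := by
    rw [hcalc]
    rw [div_le_iff₀ hd]
    linarith
  linarith

/-- Bauer's theorem in `ℕ → ℝ`: a probability measure carried by a compact convex set
whose coordinatewise barycenter is an extreme point is the Dirac measure there. -/
theorem bauer_dirac {Y : Set (ℕ → ℝ)} (hYcomp : IsCompact Y) (hYconv : Convex ℝ Y)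
    (ν : Measure (ℕ → ℝ)) [IsProbabilityMeasure ν] (hνY : ν Y = 1)
    {b : ℕ → ℝ} (hbY : b ∈ Y.extremePoints ℝ) (hb : ∀ m, ∫ y, y m ∂ν = b m) :
    ν = Measure.dirac b := by
  have hYm : MeasurableSet Y := hYcomp.isClosed.measurableSet
  have hcomp0 : ν Yᶜ = 0 := by
    rw [measure_compl hYm (measure_ne_top _ _), measure_univ, hνY, tsub_self]
  have hae : ∀ᵐ y ∂ν, y ∈ Y := by
    rw [ae_iff]
    exact hcomp0
  have hYne : Y.Nonempty := by
    rcases Y.eq_empty_or_nonempty with rfl | h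
    · rw [show (∅ : Set (ℕ → ℝ))ᶜ = Set.univ by simp, measure_univ] at hcomp0
      exact absurd hcomp0 one_ne_zero
    · exact h
  have hbound : ∀ m, ∃ M : ℝ, ∀ y ∈ Y, |y m| ≤ M := by
    intro m
    obtain ⟨x₀, hx₀, hmax⟩ := hYcomp.exists_isMaxOn hYne
      ((continuous_abs.comp (continuous_apply m)).continuousOn)
    exact ⟨|x₀ m|, fun y hy => hmax hy⟩
  have hint : ∀ m, Integrable (fun y => y m) ν := by
    intro m
    obtain ⟨M, hM⟩ := hbound m
    refine Integrable.mono' (integrable_const M)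
      ((measurable_pi_apply m).aestronglyMeasurable) ?_
    filter_upwards [hae] with y hy
    exact hM y hy
  have key : ∀ m, ∀ᵐ y ∂ν, y m = b m := by
    intro m
    set S := {y : ℕ → ℝ | y m ≤ b m} with hSdef
    have hSm : MeasurableSet S :=
      measurableSet_le (measurable_pi_apply m) measurable_const
    have hsub : Integrable (fun y => y m - b m) ν := (hint m).sub (integrable_const _)
    have htot : ∫ y, (y m - b m) ∂ν = 0 := by
      rw [integral_sub (hint m) (integrable_const _), hb m, integral_const,
        probReal_univ]
      simp
    by_cases hc1 : ν Sᶜ = 0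
    · have haeS : ∀ᵐ y ∂ν, y ∈ S := by
        rw [ae_iff]
        exact hc1
      have h0 : ∫ y, (b m - y m) ∂ν = 0 := by
        rw [integral_sub (integrable_const _) (hint m), hb m, integral_const,
          probReal_univ]
        simp
      have hz := (integral_eq_zero_iff_of_nonneg_ae ?_
        ((integrable_const _).sub (hint m))).1 h0
      · filter_upwards [hz] with y hy
        have h6 : b m - y m = 0 := hy
        linarith
      · filter_upwards [haeS] with y hy
        have h7 : y m ≤ b m := hy
        show (0:ℝ) ≤ b m - y m
        linarith
    by_cases hc2 : ν S = 0
    · exfalso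
      have haeSc : ∀ᵐ y ∂ν, b m < y m := by
        rw [ae_iff]
        have : {y : ℕ → ℝ | ¬ b m < y m} = S := by
          ext y; simp [hSdef, not_lt]
        rw [this]
        exact hc2
      have hz := (integral_eq_zero_iff_of_nonneg_ae ?_ hsub).1 htot
      · have hFalse : ∀ᵐ y ∂ν, False := by
          filter_upwards [haeSc, hz] with y h1 h2
          have h6 : y m - b m = 0 := h2
          linarith
        have h1 : ν Set.univ = 0 := by
          simpa [ae_iff] using hFalse
        rw [measure_univ] at h1
        exact one_ne_zero h1
      · filter_upwards [haeSc] with y hy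
        show (0:ℝ) ≤ y m - b m
        linarith
    · exfalso
      set s₁ : ℝ := (ν S).toReal with hs₁def
      set s₂ : ℝ := (ν Sᶜ).toReal with hs₂def
      have hs₁pos : 0 < s₁ := ENNReal.toReal_pos hc2 (measure_ne_top _ _)
      have hs₂pos : 0 < s₂ := ENNReal.toReal_pos hc1 (measure_ne_top _ _)
      have hsum : s₁ + s₂ = 1 := by
        rw [hs₁def, hs₂def, ← ENNReal.toReal_add (measure_ne_top _ _) (measure_ne_top _ _),
          measure_add_measure_compl hSm, measure_univ, ENNReal.toReal_one]
      -- restricted measures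
      have hρY : ∀ (T : Set (ℕ → ℝ)), (ν.restrict T) Yᶜ = 0 := by
        intro T
        refine le_antisymm (le_trans (Measure.restrict_le_self _) hcomp0.le) (by simp)
      have hρ₁0 : (ν.restrict S) Set.univ ≠ 0 := by
        rw [Measure.restrict_apply_univ]; exact hc2
      have hρ₂0 : (ν.restrict Sᶜ) Set.univ ≠ 0 := by
        rw [Measure.restrict_apply_univ]; exact hc1
      have hint₁ : ∀ m', Integrable (fun y => y m') (ν.restrict S) :=
        fun m' => (hint m').restrict
      have hint₂ : ∀ m', Integrable (fun y => y m') (ν.restrict Sᶜ) :=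
        fun m' => (hint m').restrict
      set b₁ : ℕ → ℝ := fun m' => (∫ y, y m' ∂(ν.restrict S)) / ((ν.restrict S) Set.univ).toReal with hb₁def
      set b₂ : ℕ → ℝ := fun m' => (∫ y, y m' ∂(ν.restrict Sᶜ)) / ((ν.restrict Sᶜ) Set.univ).toReal with hb₂def
      have hb₁Y : b₁ ∈ Y := restricted_barycenter_mem hYcomp hYconv _ (hρY S) hρ₁0 hint₁
      have hb₂Y : b₂ ∈ Y := restricted_barycenter_mem hYcomp hYconv _ (hρY Sᶜ) hρ₂0 hint₂
      have hru₁ : ((ν.restrict S) Set.univ).toReal = s₁ := by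
        rw [Measure.restrict_apply_univ]
      have hru₂ : ((ν.restrict Sᶜ) Set.univ).toReal = s₂ := by
        rw [Measure.restrict_apply_univ]
      have hcomb : s₁ • b₁ + s₂ • b₂ = b := by
        funext m'
        have hsplit : ∫ y in S, y m' ∂ν + ∫ y in Sᶜ, y m' ∂ν = ∫ y, y m' ∂ν :=
          integral_add_compl hSm (hint m')
        have h1 : s₁ * b₁ m' = ∫ y in S, y m' ∂ν := by
          rw [hb₁def]
          simp only []
          rw [hru₁]
          field_simp
        have h2 : s₂ * b₂ m' = ∫ y in Sᶜ, y m' ∂ν := by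
          rw [hb₂def]
          simp only []
          rw [hru₂]
          field_simp
        have : (s₁ • b₁ + s₂ • b₂) m' = s₁ * b₁ m' + s₂ * b₂ m' := rfl
        rw [this, h1, h2, hsplit, hb m']
      have hseg : b ∈ openSegment ℝ b₁ b₂ := ⟨s₁, s₂, hs₁pos, hs₂pos, hsum, hcomb⟩
      obtain ⟨hb₁b, hb₂b⟩ := (mem_extremePoints.1 hbY).2 _ hb₁Y _ hb₂Y hseg
      -- contradiction on Sᶜ
      have hzero : ∫ y in Sᶜ, (y m - b m) ∂ν = 0 := by
        rw [integral_sub (hint₂ m) (integrable_const _), integral_const,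
          measureReal_restrict_apply_univ]
        have h3 : ∫ y in Sᶜ, y m ∂ν = s₂ * b₂ m := by
          rw [hb₂def]
          simp only []
          rw [hru₂]
          field_simp
        rw [h3, hb₂b]
        rw [smul_eq_mul, hs₂def, measureReal_def]
        ring
      have hnn : 0 ≤ᵐ[ν.restrict Sᶜ] fun y => y m - b m := by
        rw [EventuallyLE, ae_restrict_iff' hSm.compl]
        apply Filter.Eventually.of_forall
        intro y hy
        have h8 : b m < y m := not_le.1 hy
        show (0:ℝ) ≤ y m - b m
        linarith
      have hz := (integral_eq_zero_iff_of_nonneg_ae hnn ((hint₂ m).sub (integrable_const _))).1 hzero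
      have hmeaszero : (ν.restrict Sᶜ) {y : ℕ → ℝ | ¬ (y m - b m = 0)} = 0 := by
        have := hz
        rw [Filter.EventuallyEq, ae_iff] at this
        exact this
      have hsup : Sᶜ ⊆ {y : ℕ → ℝ | ¬ (y m - b m = 0)} := by
        intro y hy
        have : b m < y m := not_le.1 hy
        simp only [Set.mem_setOf_eq]
        intro h
        linarith
      have : ν Sᶜ = 0 := by
        have h4 : (ν.restrict Sᶜ) Sᶜ = ν Sᶜ := Measure.restrict_apply_self _ _
        have h5 : (ν.restrict Sᶜ) Sᶜ ≤ 0 := hmeaszero ▸ measure_mono hsup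
        rw [h4] at h5
        exact le_antisymm h5 zero_le
      exact hc1 this
  -- conclude
  have hbmeas : MeasurableSet ({b} : Set (ℕ → ℝ)) := by
    have : ({b} : Set (ℕ → ℝ)) = ⋂ m, {y : ℕ → ℝ | y m = b m} := by
      ext y
      simp only [Set.mem_singleton_iff, Set.mem_iInter, Set.mem_setOf_eq]
      exact ⟨fun h m => by rw [h], fun h => funext h⟩
    rw [this]
    exact MeasurableSet.iInter fun m =>
      measurableSet_eq_fun (measurable_pi_apply m) measurable_const
  have hcompl0 : ν ({b} : Set (ℕ → ℝ))ᶜ = 0 := by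
    have hset : ({b} : Set (ℕ → ℝ))ᶜ = ⋃ m, {y : ℕ → ℝ | y m ≠ b m} := by
      ext y
      simp only [Set.mem_compl_iff, Set.mem_singleton_iff, Set.mem_iUnion,
        Set.mem_setOf_eq]
      exact Function.ne_iff
    rw [hset]
    exact measure_iUnion_null fun m => by simpa [ae_iff] using key m
  have hb1 : ν ({b} : Set (ℕ → ℝ)) = 1 := by
    have := measure_add_measure_compl hbmeas (μ := ν)
    rw [hcompl0, add_zero, measure_univ] at this
    exact this
  refine Measure.ext fun s hs => ?_
  rw [Measure.dirac_apply' _ hs]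
  by_cases hbs : b ∈ s
  · have h1 : ν s = 1 := by
      refine le_antisymm prob_le_one ?_
      exact hb1 ▸ measure_mono (Set.singleton_subset_iff.2 hbs)
    rw [h1]
    simp [Set.indicator_of_mem hbs]
  · have h1 : ν s = 0 := by
      refine le_antisymm ?_ (by simp)
      have hsb : s ⊆ ({b} : Set (ℕ → ℝ))ᶜ := fun z hz hzb => hbs (by
        rw [Set.mem_singleton_iff] at hzb
        rw [← hzb]; exact hz)
      exact hcompl0 ▸ measure_mono hsb
    rw [h1]
    simp [Set.indicator_of_notMem hbs]

end PiSide

end Aux11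

/-- Let `X` be a compact convex subset of a real locally convex
Hausdorff space with `ext X` Lindelöf and let `f ∈ C_α(ext X)` have values in `[0,1]`.
Then there are a Baire set `B ⊇ ext X` and a function `g ∈ C_α(B)` with values in
`[0,1]` extending `f` and satisfying the barycentric formula for every Radon
probability measure `μ` with `μ(B) = 1` and barycenter in `B`. -/
theorem statement11 {E : Type*} [AddCommGroup E] [Module ℝ E] [TopologicalSpace E]
    [IsTopologicalAddGroup E] [ContinuousSMul ℝ E] [LocallyConvexSpace ℝ E] [T2Space E]
    [MeasurableSpace E] [BorelSpace E]
    (X : Set E) (hXcomp : IsCompact X) (hXconv : Convex ℝ X)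
    (hLind : IsLindelof (X.extremePoints ℝ))
    (α : Ordinal.{0}) (hα : α < omega1)
    (f : ↥(X.extremePoints ℝ) → ℝ)
    (hfα : BaireClass ↥(X.extremePoints ℝ) ℝ α f)
    (hf01 : ∀ e, f e ∈ Set.Icc (0 : ℝ) 1) :
    ∃ (B : Set ↥X) (g : ↥X → ℝ),
      MeasurableSet[BaireSigma ↥X] B ∧
      (∀ x : ↥X, (x : E) ∈ X.extremePoints ℝ → x ∈ B) ∧
      BaireClass ↥B ℝ α (fun b : ↥B => g (b : ↥X)) ∧
      (∀ x ∈ B, g x ∈ Set.Icc (0 : ℝ) 1) ∧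
      (∀ (x : ↥X) (hx : (x : E) ∈ X.extremePoints ℝ), g x = f ⟨(x : E), hx⟩) ∧
      (∀ μ : ProbabilityMeasure ↥X, μ.toMeasure.InnerRegular → μ.toMeasure B = 1 →
        ∀ x : ↥X, IsBarycenter X μ.toMeasure x → x ∈ B →
          g x = ∫ y : ↥X, g y ∂μ.toMeasure) := by
  classical
  -- a countable generating family for `f`
  obtain ⟨C, hCc, hCcont, hCBIn⟩ := exists_countable_BIn hfα
  -- countable family of functionals giving the cylindrical factorization
  obtain ⟨Q₁, hQ₁c, hFact1⟩ := fact1 hXcomp hLind C hCc hCcont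
  -- close off so that images of extreme points are extreme
  obtain ⟨Q, hQ₁Q, hQc, hFact2⟩ := closing_lemma hXcomp hLind Q₁ hQ₁c
  obtain ⟨L, hL⟩ := (hQc.insert (0 : E →L[ℝ] ℝ)).exists_eq_range
    (Set.insert_nonempty 0 Q)
  set Φ : E → ℕ → ℝ := fun w n => L n w with hΦ
  have hΦcont : Continuous Φ := continuous_pi fun n => (L n).continuous
  set Y : Set (ℕ → ℝ) := Φ '' X with hYdef
  set Z : Set (ℕ → ℝ) := Φ '' (X.extremePoints ℝ) with hZdef
  have hεX : X.extremePoints ℝ ⊆ X := extremePoints_subset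
  have hZY : Z ⊆ Y := Set.image_mono hεX
  have hYcomp : IsCompact Y := hXcomp.image hΦcont
  have hYconv : Convex ℝ Y := by
    have h1 : Y = ⇑(LinearMap.pi fun n => (L n).toLinearMap) '' X := rfl
    rw [h1]
    exact hXconv.linear_image _
  have hrangeL : ∀ l ∈ Q, ∃ n, L n = l := by
    intro l hl
    have : l ∈ Set.range L := by rw [← hL]; exact Set.mem_insert_of_mem _ hl
    exact this
  have hLmem : ∀ n, L n = 0 ∨ L n ∈ Q := by
    intro n
    have : L n ∈ insert (0 : E →L[ℝ] ℝ) Q := by rw [hL]; exact Set.mem_range_self n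
    simpa using this
  -- images of extreme points are extreme points of the image
  have hZsubext : Z ⊆ Y.extremePoints ℝ := by
    rintro z ⟨e, he, rfl⟩
    refine mem_extremePoints.2 ⟨⟨e, hεX he, rfl⟩, ?_⟩
    rintro y₁ ⟨x₁, hx₁, rfl⟩ y₂ ⟨x₂, hx₂, rfl⟩ ⟨a, b, ha, hb, hab, heq⟩
    have hcoord : ∀ n, a * L n x₁ + b * L n x₂ = L n e := by
      intro n
      have h1 := congrFun heq n
      simpa [hΦ, smul_eq_mul] using h1
    have hmatch : ∀ l ∈ Q, a * l x₁ + (1-a) * l x₂ = l e := by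
      intro l hl
      obtain ⟨n, rfl⟩ := hrangeL l hl
      have h1 := hcoord n
      rw [show (1:ℝ)-a = b by linarith]
      exact h1
    have hvar := hFact2 e he x₁ hx₁ x₂ hx₂ a ⟨ha.le, by linarith⟩ hmatch
    have hcoordeq : ∀ n, L n x₁ = L n e ∧ L n x₂ = L n e := by
      intro n
      rcases hLmem n with h0 | hQn
      · rw [h0]; simp
      · have h1 := hvar (L n) hQn
        have h2 := hmatch (L n) hQn
        have hid : a * (1-a) * (L n x₁ - L n x₂)^2
            = (a * (L n x₁)^2 + (1-a) * (L n x₂)^2)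
              - (a * L n x₁ + (1-a) * L n x₂)^2 := by ring
        have h5 : a * (1-a) * (L n x₁ - L n x₂)^2 = 0 := by
          rw [hid, h2, h1, sub_self]
        have hkey : L n x₁ = L n x₂ := by
          rcases mul_eq_zero.1 h5 with h | h
          · exfalso
            have hpos : 0 < a * (1-a) := mul_pos ha (by linarith)
            rw [h] at hpos
            exact lt_irrefl 0 hpos
          · have := pow_eq_zero_iff (n := 2) (by norm_num) |>.1 h
            linarith [sub_eq_zero.1 this]
        have h3 : L n x₂ = L n e := by
          rw [hkey] at h2
          have h4 : a * L n x₂ + (1-a) * L n x₂ = L n x₂ := by ring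
          linarith
        exact ⟨by rw [hkey, h3], h3⟩
    constructor
    · funext n; exact (hcoordeq n).1
    · funext n; exact (hcoordeq n).2
  have hextsub : Y.extremePoints ℝ ⊆ Z := by
    intro y hy
    have hsurj := surjOn_extremePoints_image
      ((ContinuousLinearMap.pi L).toContinuousAffineMap) hXcomp
    have hy' : y ∈ extremePoints ℝ (⇑((ContinuousLinearMap.pi L).toContinuousAffineMap) '' X) := by
      have hc : ⇑((ContinuousLinearMap.pi L).toContinuousAffineMap) = Φ := rfl
      rw [hc]
      exact hy
    obtain ⟨e, he, heq⟩ := hsurj hy'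
    exact ⟨e, he, heq⟩
  have hZext : Z = Y.extremePoints ℝ := Set.Subset.antisymm hZsubext hextsub
  have hZmeas : MeasurableSet Z := by
    rw [hZext]
    exact measurableSet_extremePoints_pi hYcomp hYconv
  set Φc : ↥X → ℕ → ℝ := fun x => Φ (x : E) with hΦcdef
  have hΦccont : Continuous Φc := hΦcont.comp continuous_subtype_val
  set B : Set ↥X := Φc ⁻¹' Z with hBdef
  -- the extension machinery on the metrizable side
  have hM : ∀ (γ : Ordinal.{0}) (f' : ↥(X.extremePoints ℝ) → ℝ), BIn C γ f' →
      ∃ G : (ℕ → ℝ) → ℝ, Measurable G ∧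
        BaireClass ↥Z ℝ γ (fun z : ↥Z => G (z : ℕ → ℝ)) ∧
        (∀ y ∉ Z, G y = 0) ∧
        ∀ x : ↥(X.extremePoints ℝ), G (Φ (x : E)) = f' x := by
    intro γ f' hf'
    induction hf' with
    | base h hmem hcont =>
      set G : (ℕ → ℝ) → ℝ := fun y =>
        if hy : y ∈ Z then h ⟨hy.choose, hy.choose_spec.1⟩ else 0 with hGdef
      have hG0 : ∀ y ∉ Z, G y = 0 := fun y hy => dif_neg hy
      have hmain : ∀ (x x' : ↥(X.extremePoints ℝ)), Φ (x : E) = Φ (x' : E) →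
          h x < h x' → False := by
        intro x x' hΦeq hlt
        obtain ⟨p, hp1, hp2⟩ := exists_rat_btwn (show h x - 1 < h x by linarith)
        obtain ⟨q, hq1, hq2⟩ := exists_rat_btwn hlt
        obtain ⟨F, hFQ₁, δ, hδ, hcyl⟩ := hFact1 h hmem p q x ⟨hp2, hq1⟩
        have h1 : h x' ∈ Set.Ioo (q:ℝ) (q:ℝ) ∨ h x' ∈ Set.Ioo (p:ℝ) (q:ℝ) := by
          right
          apply hcyl
          intro l hl
          have hlQ : l ∈ Q := hQ₁Q (hFQ₁ hl)
          obtain ⟨n, rfl⟩ := hrangeL l hlQ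
          have : L n (x' : E) = L n (x : E) := by
            have := congrFun hΦeq n
            exact this.symm
          rw [this, sub_self, abs_zero]
          exact hδ
        rcases h1 with h1 | h1
        · exact absurd h1 (by simp)
        · linarith [h1.2]
      have hkey : ∀ (x x' : ↥(X.extremePoints ℝ)), Φ (x : E) = Φ (x' : E) →
          h x = h x' := by
        intro x x' hΦeq
        rcases lt_trichotomy (h x) (h x') with hlt | heq | hgt
        · exact absurd (hmain x x' hΦeq hlt) (fun h => h)
        · exact heq
        · exact absurd (hmain x' x hΦeq.symm hgt) (fun h => h)
      have hGΦ : ∀ x : ↥(X.extremePoints ℝ), G (Φ (x : E)) = h x := by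
        intro x
        have hyZ : Φ (x : E) ∈ Z := ⟨(x : E), x.2, rfl⟩
        simp only [hGdef]
        rw [dif_pos hyZ]
        exact hkey ⟨hyZ.choose, hyZ.choose_spec.1⟩ x hyZ.choose_spec.2
      have hGcont : Continuous fun z : ↥Z => G (z : ℕ → ℝ) := by
        rw [continuous_iff_continuousAt]
        intro z₀
        rw [ContinuousAt, tendsto_nhds]
        intro O hO hmemO
        obtain ⟨ε', hε', hball⟩ := Metric.isOpen_iff.1 hO _ hmemO
        obtain ⟨p, hp1, hp2⟩ := exists_rat_btwn
          (show G (z₀ : ℕ → ℝ) - ε' < G (z₀ : ℕ → ℝ) by linarith)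
        obtain ⟨q, hq1, hq2⟩ := exists_rat_btwn
          (show G (z₀ : ℕ → ℝ) < G (z₀ : ℕ → ℝ) + ε' by linarith)
        have hIoo : Set.Ioo (p:ℝ) (q:ℝ) ⊆ O := by
          intro r hr
          apply hball
          rw [Metric.mem_ball, Real.dist_eq]
          rw [abs_lt]
          constructor <;> [linarith [hr.1]; linarith [hr.2]]
        obtain ⟨x₀e, hx₀ε, hx₀⟩ := z₀.2
        have hGz₀ : G (z₀ : ℕ → ℝ) = h ⟨x₀e, hx₀ε⟩ := by
          rw [← hx₀]
          exact hGΦ ⟨x₀e, hx₀ε⟩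
        have hhx₀ : h ⟨x₀e, hx₀ε⟩ ∈ Set.Ioo (p:ℝ) (q:ℝ) := by
          rw [← hGz₀]
          exact ⟨hp2, hq1⟩
        obtain ⟨F, hFQ₁, δ, hδ, hcyl⟩ := hFact1 h hmem p q ⟨x₀e, hx₀ε⟩ hhx₀
        set nidx : (E →L[ℝ] ℝ) → ℕ := fun l =>
          if hl : ∃ n, L n = l then hl.choose else 0 with hnidxdef
        have hnidx : ∀ l ∈ Q, L (nidx l) = l := by
          intro l hl
          obtain ⟨n, hn⟩ := hrangeL l hl
          have hex : ∃ n, L n = l := ⟨n, hn⟩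
          simp only [hnidxdef]
          rw [dif_pos hex]
          exact hex.choose_spec
        set V : Set (ℕ → ℝ) := ⋂ l ∈ F, {y : ℕ → ℝ | |y (nidx l) - l x₀e| < δ} with hVdef
        have hVopen : IsOpen V := by
          refine isOpen_biInter_finset fun l _ => ?_
          have h2 : {y : ℕ → ℝ | |y (nidx l) - l x₀e| < δ} =
              (fun y : ℕ → ℝ => |y (nidx l) - l x₀e|) ⁻¹' Set.Iio δ := rfl
          rw [h2]
          exact isOpen_Iio.preimage
            (continuous_abs.comp ((continuous_apply _).sub continuous_const))
        have hz₀V : (z₀ : ℕ → ℝ) ∈ V := by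
          refine Set.mem_iInter₂.2 fun l hl => ?_
          have hlQ : l ∈ Q := hQ₁Q (hFQ₁ hl)
          have h3 : (z₀ : ℕ → ℝ) (nidx l) = l x₀e := by
            rw [← hx₀]
            show L (nidx l) x₀e = l x₀e
            rw [hnidx l hlQ]
          simp only [Set.mem_setOf_eq, h3, sub_self, abs_zero]
          exact hδ
        refine Filter.eventually_of_mem
          ((hVopen.preimage continuous_subtype_val).mem_nhds hz₀V) ?_
        intro z hzV
        obtain ⟨xe, hxε, hxΦ⟩ := z.2
        have hGz : G (z : ℕ → ℝ) = h ⟨xe, hxε⟩ := by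
          rw [← hxΦ]
          exact hGΦ ⟨xe, hxε⟩
        show G (z : ℕ → ℝ) ∈ O
        rw [hGz]
        apply hIoo
        apply hcyl
        intro l hl
        have hlQ : l ∈ Q := hQ₁Q (hFQ₁ hl)
        have h4 : (z : ℕ → ℝ) (nidx l) = l xe := by
          rw [← hxΦ]
          show L (nidx l) xe = l xe
          rw [hnidx l hlQ]
        have h5 := Set.mem_iInter₂.1 hzV l hl
        have h6 : |(z : ℕ → ℝ) (nidx l) - l x₀e| < δ := h5
        rw [h4] at h6
        exact h6
      have hGmeas : Measurable G :=
        measurable_extension hZmeas hGcont.measurable hG0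
      exact ⟨G, hGmeas, BaireClass.base _ hGcont, hG0, hGΦ⟩
    | lim γ βseq gseq f' hβ hg htend ih =>
      choose G hGmeas hGB hG0 hGΦ using ih
      set Gf : (ℕ → ℝ) → ℝ := fun y =>
        if hy : y ∈ Z then limUnder atTop (fun n => G n y) else 0 with hGfdef
      have hconv : ∀ z : ↥Z, ∃ c, Tendsto (fun n => G n (z : ℕ → ℝ)) atTop (𝓝 c) := by
        intro z
        obtain ⟨xe, hxε, hxΦ⟩ := z.2
        refine ⟨f' ⟨xe, hxε⟩, ?_⟩
        have h1 : ∀ n, G n (z : ℕ → ℝ) = gseq n ⟨xe, hxε⟩ := by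
          intro n
          rw [← hxΦ]
          exact hGΦ n ⟨xe, hxε⟩
        simp only [h1]
        exact htend ⟨xe, hxε⟩
      have hGfz : ∀ z : ↥Z, Tendsto (fun n => G n (z : ℕ → ℝ)) atTop
          (𝓝 (Gf (z : ℕ → ℝ))) := by
        intro z
        obtain ⟨c, hc⟩ := hconv z
        have h1 : Gf (z : ℕ → ℝ) = c := by
          simp only [hGfdef]
          rw [dif_pos z.2]
          exact hc.limUnder_eq
        rw [h1]
        exact hc
      refine ⟨Gf, ?_, ?_, fun y hy => dif_neg hy, ?_⟩
      · apply measurable_extension hZmeas ?_ (fun y hy => dif_neg hy)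
        apply measurable_of_tendsto_metrizable
          (fun n => (hGmeas n).comp measurable_subtype_coe)
        rw [tendsto_pi_nhds]
        exact hGfz
      · exact BaireClass.lim γ βseq (fun n (z : ↥Z) => G n (z : ℕ → ℝ)) _ hβ
          (fun n => hGB n) hGfz
      · intro x
        have hyZ : Φ (x : E) ∈ Z := ⟨(x : E), x.2, rfl⟩
        simp only [hGfdef]
        rw [dif_pos hyZ]
        have h1 : Tendsto (fun n => G n (Φ (x : E))) atTop (𝓝 (f' x)) := by
          have he : ∀ n, G n (Φ (x : E)) = gseq n x := fun n => hGΦ n x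
          simp only [he]
          exact htend x
        exact h1.limUnder_eq
  obtain ⟨G0, hG0m, hG0B, hG00, hG0Φ⟩ := hM α f hCBIn
  set cl : ℝ → ℝ := fun r => max 0 (min 1 r) with hcldef
  have hclcont : Continuous cl := continuous_const.max (continuous_const.min continuous_id)
  set g : ↥X → ℝ := fun x => cl (G0 (Φc x)) with hgdef
  refine ⟨B, g, ?_, ?_, ?_, ?_, ?_, ?_⟩
  · exact baire_preimage hΦccont hZmeas
  · intro x hx
    exact Set.mem_preimage.2 ⟨(x : E), hx, rfl⟩
  · have hψ : Continuous fun b : ↥B => (⟨Φc (b : ↥X), b.2⟩ : ↥Z) :=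
      Continuous.subtype_mk (hΦccont.comp continuous_subtype_val) _
    have hB1 : BaireClass ↥Z ℝ α (fun z : ↥Z => cl (G0 (z : ℕ → ℝ))) :=
      hG0B.continuous_comp hclcont
    exact hB1.comp_continuous hψ
  · intro x hx
    exact ⟨le_max_left 0 _, max_le zero_le_one (min_le_left _ _)⟩
  · intro x hx
    have h1 : G0 (Φ (x : E)) = f ⟨(x : E), hx⟩ := hG0Φ ⟨(x : E), hx⟩
    show cl (G0 (Φc x)) = f ⟨(x : E), hx⟩
    have h2 : Φc x = Φ (x : E) := rfl
    rw [h2, h1]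
    obtain ⟨h01, h02⟩ := hf01 ⟨(x : E), hx⟩
    simp only [hcldef]
    rw [min_eq_right h02, max_eq_right h01]
  · intro μ hreg hμB x₀ hbar hx₀B
    have hΦcm : Measurable Φc := hΦccont.measurable
    set ν : Measure (ℕ → ℝ) := Measure.map Φc μ.toMeasure with hνdef
    haveI : IsProbabilityMeasure ν :=
      Measure.isProbabilityMeasure_map hΦcm.aemeasurable
    have hνZ : ν Z = 1 := by
      rw [hνdef, Measure.map_apply hΦcm hZmeas]
      exact hμB
    have hνY : ν Y = 1 :=
      le_antisymm prob_le_one (by rw [← hνZ]; exact measure_mono hZY)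
    have hbar' : ∀ m, ∫ y, y m ∂ν = Φ (x₀ : E) m := by
      intro m
      rw [hνdef, integral_map hΦcm.aemeasurable
        ((measurable_pi_apply m).aestronglyMeasurable)]
      exact (hbar (L m)).symm
    have hbY : Φ (x₀ : E) ∈ Y.extremePoints ℝ := by
      rw [← hZext]
      exact hx₀B
    have hdirac := bauer_dirac hYcomp hYconv ν hνY hbY hbar'
    have hGmeas2 : Measurable fun y => cl (G0 y) := hclcont.measurable.comp hG0m
    calc g x₀ = cl (G0 (Φ (x₀ : E))) := rfl
    _ = ∫ y, cl (G0 y) ∂(Measure.dirac (Φ (x₀ : E))) :=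
        (integral_dirac' _ _ hGmeas2.stronglyMeasurable).symm
    _ = ∫ y, cl (G0 y) ∂ν := by rw [hdirac]
    _ = ∫ x, cl (G0 (Φc x)) ∂μ.toMeasure := by
        rw [hνdef, integral_map hΦcm.aemeasurable hGmeas2.aestronglyMeasurable]
    _ = ∫ y, g y ∂μ.toMeasure := rfl
end
end

section
/- Let φ : X → Y be a continuous surjection of a compact Hausdorff space X onto a compact Hausdorff space Y, and let f : X → ℝ be a bounded Σ_α(Bos(X))-measurable function for some countable ordinal α ≥ 2. Then there exists a map ψ : Y → X such that φ(ψ(y)) = y for every y ∈ Y and f ∘ ψ is Σ_α(Bos(Y))-measurable. -/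
open MeasureTheory Filter Topology Set

noncomputable section

/-- The transfinite hierarchy `(Σ_α(F), Π_α(F))` built over an algebra of sets `F`:
`Σ_α(F)` consists of countable unions of sets each of which belongs to `F` or to some
`Π_β(F)` with `2 ≤ β < α`, and dually for `Π_α(F)`. -/
def SigPiAux {X : Type*} (F : Set X → Prop) :
    Ordinal.{0} → ((Set X → Prop) × (Set X → Prop)) :=
  WellFounded.fix wellFounded_lt fun α ih =>
    ( fun s => ∃ g : ℕ → Set X,
        (∀ n, F (g n) ∨ ∃ β, ∃ _ : (2 : Ordinal.{0}) ≤ β, ∃ h : β < α, (ih β h).2 (g n)) ∧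
        s = ⋃ n, g n,
      fun s => ∃ g : ℕ → Set X,
        (∀ n, F (g n) ∨ ∃ β, ∃ _ : (2 : Ordinal.{0}) ≤ β, ∃ h : β < α, (ih β h).1 (g n)) ∧
        s = ⋂ n, g n )

/-- The additive class `Σ_α(F)`. -/
def SigmaClass {X : Type*} (F : Set X → Prop) (α : Ordinal.{0}) (s : Set X) : Prop :=
  (SigPiAux F α).1 s

/-- `Σ_α(F)`-measurability of a function: preimages of open sets lie in `Σ_α(F)`. -/
def SigmaClassMeasurable {X Y : Type*} [TopologicalSpace Y] (F : Set X → Prop)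
    (α : Ordinal.{0}) (f : X → Y) : Prop :=
  ∀ U : Set Y, IsOpen U → SigmaClass F α (f ⁻¹' U)



def PiClass {X : Type*} (F : Set X → Prop) (α : Ordinal.{0}) (s : Set X) : Prop :=
  (SigPiAux F α).2 s

theorem SigPiAux_eq {X : Type*} (F : Set X → Prop) (α : Ordinal.{0}) :
    SigPiAux F α =
    ( fun s => ∃ g : ℕ → Set X,
        (∀ n, F (g n) ∨ ∃ β, ∃ _ : (2 : Ordinal.{0}) ≤ β, ∃ _ : β < α, PiClass F β (g n)) ∧
        s = ⋃ n, g n,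
      fun s => ∃ g : ℕ → Set X,
        (∀ n, F (g n) ∨ ∃ β, ∃ _ : (2 : Ordinal.{0}) ≤ β, ∃ _ : β < α, SigmaClass F β (g n)) ∧
        s = ⋂ n, g n ) := by
  unfold SigPiAux
  exact WellFounded.fix_eq _ _ _

theorem sigmaClass_iff {X : Type*} (F : Set X → Prop) (α : Ordinal.{0}) (s : Set X) :
    SigmaClass F α s ↔ ∃ g : ℕ → Set X,
      (∀ n, F (g n) ∨ ∃ β, (2 : Ordinal.{0}) ≤ β ∧ β < α ∧ PiClass F β (g n)) ∧
      s = ⋃ n, g n := by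
  rw [SigmaClass, SigPiAux_eq]
  constructor
  · rintro ⟨g, hg, rfl⟩
    exact ⟨g, fun n => (hg n).imp id (fun ⟨β, h1, h2, h3⟩ => ⟨β, h1, h2, h3⟩), rfl⟩
  · rintro ⟨g, hg, rfl⟩
    exact ⟨g, fun n => (hg n).imp id (fun ⟨β, h1, h2, h3⟩ => ⟨β, h1, h2, h3⟩), rfl⟩

theorem piClass_iff {X : Type*} (F : Set X → Prop) (α : Ordinal.{0}) (s : Set X) :
    PiClass F α s ↔ ∃ g : ℕ → Set X,
      (∀ n, F (g n) ∨ ∃ β, (2 : Ordinal.{0}) ≤ β ∧ β < α ∧ SigmaClass F β (g n)) ∧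
      s = ⋂ n, g n := by
  rw [PiClass, SigPiAux_eq]
  constructor
  · rintro ⟨g, hg, rfl⟩
    exact ⟨g, fun n => (hg n).imp id (fun ⟨β, h1, h2, h3⟩ => ⟨β, h1, h2, h3⟩), rfl⟩
  · rintro ⟨g, hg, rfl⟩
    exact ⟨g, fun n => (hg n).imp id (fun ⟨β, h1, h2, h3⟩ => ⟨β, h1, h2, h3⟩), rfl⟩

-- monotonicity in F
theorem sigPi_mono {X : Type*} {F F' : Set X → Prop} (hFF : ∀ s, F s → F' s)
    (α : Ordinal.{0}) :
    (∀ s, SigmaClass F α s → SigmaClass F' α s) ∧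
    (∀ s, PiClass F α s → PiClass F' α s) := by
  induction α using Ordinal.induction with
  | h α IH =>
    constructor
    · intro s hs
      rw [sigmaClass_iff] at hs ⊢
      obtain ⟨g, hg, rfl⟩ := hs
      exact ⟨g, fun n => (hg n).imp (hFF _)
        (fun ⟨β, h1, h2, h3⟩ => ⟨β, h1, h2, (IH β h2).2 _ h3⟩), rfl⟩
    · intro s hs
      rw [piClass_iff] at hs ⊢
      obtain ⟨g, hg, rfl⟩ := hs
      exact ⟨g, fun n => (hg n).imp (hFF _)
        (fun ⟨β, h1, h2, h3⟩ => ⟨β, h1, h2, (IH β h2).1 _ h3⟩), rfl⟩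

theorem algGen_mono {X : Type*} {G G' : Set X → Prop} (h : ∀ s, G s → G' s)
    {s : Set X} (hs : AlgGen G s) : AlgGen G' s := by
  induction hs with
  | basic s hs => exact AlgGen.basic s (h s hs)
  | empty => exact AlgGen.empty
  | compl s _ ih => exact AlgGen.compl s ih
  | union s t _ _ ih1 ih2 => exact AlgGen.union s t ih1 ih2

-- closure of Sigma under countable unions
theorem sigmaClass_iUnion {X : Type*} {F : Set X → Prop}
    {α : Ordinal.{0}} {s : ℕ → Set X} (hs : ∀ n, SigmaClass F α (s n)) :
    SigmaClass F α (⋃ n, s n) := by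
  choose g hg hseq using fun n => (sigmaClass_iff F α (s n)).mp (hs n)
  rw [sigmaClass_iff]
  refine ⟨fun k => g (Nat.unpair k).1 (Nat.unpair k).2, fun k => hg _ _, ?_⟩
  ext x
  simp only [mem_iUnion]
  constructor
  · rintro ⟨n, hx⟩
    rw [hseq n] at hx
    obtain ⟨m, hm⟩ := mem_iUnion.mp hx
    exact ⟨Nat.pair n m, by simpa [Nat.unpair_pair] using hm⟩
  · rintro ⟨k, hk⟩
    exact ⟨(Nat.unpair k).1, by rw [hseq]; exact mem_iUnion.mpr ⟨_, hk⟩⟩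

theorem sigmaClass_of_F {X : Type*} {F : Set X → Prop} {α : Ordinal.{0}} {s : Set X}
    (hs : F s) : SigmaClass F α s := by
  rw [sigmaClass_iff]
  exact ⟨fun _ => s, fun _ => Or.inl hs, (iUnion_const s).symm⟩




-- extraction of countable generating open family, part 1: Bos
theorem bos_extract {X : Type*} [TopologicalSpace X] {s : Set X} (hs : Bos X s) :
    ∃ T : Set (Set X), T.Countable ∧ (∀ u ∈ T, IsOpen u) ∧ AlgGen (· ∈ T) s := by
  induction hs with
  | basic s hs => exact ⟨{s}, countable_singleton s, by simpa using hs,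
      AlgGen.basic s rfl⟩
  | empty => exact ⟨∅, countable_empty, by simp, AlgGen.empty⟩
  | compl s _ ih =>
    obtain ⟨T, hTc, hTo, hT⟩ := ih
    exact ⟨T, hTc, hTo, AlgGen.compl s hT⟩
  | union s t _ _ ih1 ih2 =>
    obtain ⟨T1, hT1c, hT1o, hT1⟩ := ih1
    obtain ⟨T2, hT2c, hT2o, hT2⟩ := ih2
    refine ⟨T1 ∪ T2, hT1c.union hT2c, ?_, AlgGen.union s t
      (algGen_mono (fun u hu => Or.inl hu) hT1)
      (algGen_mono (fun u hu => Or.inr hu) hT2)⟩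
    rintro u (hu | hu)
    exacts [hT1o u hu, hT2o u hu]

-- extraction, full hierarchy
theorem class_extract {X : Type*} [TopologicalSpace X] (α : Ordinal.{0}) :
    (∀ s : Set X, SigmaClass (Bos X) α s → ∃ T : Set (Set X), T.Countable ∧
        (∀ u ∈ T, IsOpen u) ∧ SigmaClass (AlgGen (· ∈ T)) α s) ∧
    (∀ s : Set X, PiClass (Bos X) α s → ∃ T : Set (Set X), T.Countable ∧
        (∀ u ∈ T, IsOpen u) ∧ PiClass (AlgGen (· ∈ T)) α s) := by
  induction α using Ordinal.induction with
  | h α IH =>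
    have key : ∀ (g : ℕ → Set X),
        (∀ n, Bos X (g n) ∨ ∃ β, (2:Ordinal.{0}) ≤ β ∧ β < α ∧ PiClass (Bos X) β (g n)) →
        ∃ T : Set (Set X), T.Countable ∧ (∀ u ∈ T, IsOpen u) ∧
          (∀ n, AlgGen (· ∈ T) (g n) ∨
            ∃ β, (2:Ordinal.{0}) ≤ β ∧ β < α ∧ PiClass (AlgGen (· ∈ T)) β (g n)) := by
      intro g hg
      have h : ∀ n, ∃ T : Set (Set X), T.Countable ∧ (∀ u ∈ T, IsOpen u) ∧
          (AlgGen (· ∈ T) (g n) ∨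
            ∃ β, (2:Ordinal.{0}) ≤ β ∧ β < α ∧ PiClass (AlgGen (· ∈ T)) β (g n)) := by
        intro n
        rcases hg n with h | ⟨β, hβ2, hβα, hβ⟩
        · obtain ⟨T, hTc, hTo, hT⟩ := bos_extract h
          exact ⟨T, hTc, hTo, Or.inl hT⟩
        · obtain ⟨T, hTc, hTo, hT⟩ := (IH β hβα).2 (g n) hβ
          exact ⟨T, hTc, hTo, Or.inr ⟨β, hβ2, hβα, hT⟩⟩
      choose T hTc hTo hT using h
      refine ⟨⋃ n, T n, countable_iUnion hTc, ?_, ?_⟩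
      · intro u hu
        obtain ⟨n, hn⟩ := mem_iUnion.mp hu
        exact hTo n u hn
      · intro n
        have hmono : ∀ u, u ∈ T n → u ∈ ⋃ m, T m := fun u hu => mem_iUnion.mpr ⟨n, hu⟩
        rcases hT n with h | ⟨β, h1, h2, h3⟩
        · exact Or.inl (algGen_mono hmono h)
        · exact Or.inr ⟨β, h1, h2,
            (sigPi_mono (fun u => algGen_mono hmono) β).2 _ h3⟩
    constructor
    · intro s hs
      rw [sigmaClass_iff] at hs
      obtain ⟨g, hg, rfl⟩ := hs
      obtain ⟨T, hTc, hTo, hT⟩ := key g hg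
      exact ⟨T, hTc, hTo, (sigmaClass_iff _ _ _).mpr ⟨g, hT, rfl⟩⟩
    · intro s hs
      rw [piClass_iff] at hs
      obtain ⟨g, hg, rfl⟩ := hs
      -- dual of key
      have key2 : ∃ T : Set (Set X), T.Countable ∧ (∀ u ∈ T, IsOpen u) ∧
          (∀ n, AlgGen (· ∈ T) (g n) ∨
            ∃ β, (2:Ordinal.{0}) ≤ β ∧ β < α ∧ SigmaClass (AlgGen (· ∈ T)) β (g n)) := by
        have h : ∀ n, ∃ T : Set (Set X), T.Countable ∧ (∀ u ∈ T, IsOpen u) ∧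
            (AlgGen (· ∈ T) (g n) ∨
              ∃ β, (2:Ordinal.{0}) ≤ β ∧ β < α ∧ SigmaClass (AlgGen (· ∈ T)) β (g n)) := by
          intro n
          rcases hg n with h | ⟨β, hβ2, hβα, hβ⟩
          · obtain ⟨T, hTc, hTo, hT⟩ := bos_extract h
            exact ⟨T, hTc, hTo, Or.inl hT⟩
          · obtain ⟨T, hTc, hTo, hT⟩ := (IH β hβα).1 (g n) hβ
            exact ⟨T, hTc, hTo, Or.inr ⟨β, hβ2, hβα, hT⟩⟩
        choose T hTc hTo hT using h
        refine ⟨⋃ n, T n, countable_iUnion hTc, ?_, ?_⟩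
        · intro u hu
          obtain ⟨n, hn⟩ := mem_iUnion.mp hu
          exact hTo n u hn
        · intro n
          have hmono : ∀ u, u ∈ T n → u ∈ ⋃ m, T m := fun u hu => mem_iUnion.mpr ⟨n, hu⟩
          rcases hT n with h | ⟨β, h1, h2, h3⟩
          · exact Or.inl (algGen_mono hmono h)
          · exact Or.inr ⟨β, h1, h2,
              (sigPi_mono (fun u => algGen_mono hmono) β).1 _ h3⟩
      obtain ⟨T, hTc, hTo, hT⟩ := key2
      exact ⟨T, hTc, hTo, (piClass_iff _ _ _).mpr ⟨g, hT, rfl⟩⟩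


-- ============ Bos closure lemmas ============
theorem bos_open {X : Type*} [TopologicalSpace X] {U : Set X} (h : IsOpen U) : Bos X U :=
  AlgGen.basic U h

theorem bos_compl {X : Type*} [TopologicalSpace X] {s : Set X} (h : Bos X s) : Bos X sᶜ :=
  AlgGen.compl s h

theorem bos_union {X : Type*} [TopologicalSpace X] {s t : Set X} (hs : Bos X s)
    (ht : Bos X t) : Bos X (s ∪ t) := AlgGen.union s t hs ht

theorem bos_inter {X : Type*} [TopologicalSpace X] {s t : Set X} (hs : Bos X s)
    (ht : Bos X t) : Bos X (s ∩ t) := by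
  have : s ∩ t = (sᶜ ∪ tᶜ)ᶜ := by rw [compl_union, compl_compl, compl_compl]
  rw [this]
  exact bos_compl (bos_union (bos_compl hs) (bos_compl ht))

-- ============ the selection sequence ============
section Selection
variable {X Y : Type*} [TopologicalSpace X] [CompactSpace X] [T2Space X]
    [TopologicalSpace Y] [CompactSpace Y] [T2Space Y]

open scoped Classical in
/-- The shrinking fiber sequence. -/
noncomputable def Cseq (φ : X → Y) (e : ℕ → Set X) (y : Y) : ℕ → Set X
  | 0 => φ ⁻¹' {y}
  | n + 1 =>
      if (Cseq φ e y n \ e n).Nonempty then Cseq φ e y n \ e n else Cseq φ e y n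

theorem cseq_closed (φ : X → Y) (hφc : Continuous φ) (e : ℕ → Set X)
    (he : ∀ n, IsOpen (e n)) (y : Y) : ∀ n, IsClosed (Cseq φ e y n) := by
  intro n
  induction n with
  | zero => exact (isClosed_singleton).preimage hφc
  | succ n ih =>
    rw [Cseq]
    split
    · exact ih.inter (he n).isClosed_compl
    · exact ih

theorem cseq_nonempty (φ : X → Y) (hφs : Function.Surjective φ) (e : ℕ → Set X)
    (y : Y) : ∀ n, (Cseq φ e y n).Nonempty := by
  intro n
  induction n with
  | zero =>
    obtain ⟨x, hx⟩ := hφs y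
    exact ⟨x, by simpa [Cseq] using hx⟩
  | succ n ih =>
    rw [Cseq]
    split
    · assumption
    · exact ih

theorem cseq_antitone (φ : X → Y) (e : ℕ → Set X) (y : Y) (n : ℕ) :
    Cseq φ e y (n + 1) ⊆ Cseq φ e y n := by
  rw [Cseq]
  split
  · exact diff_subset
  · exact subset_rfl

theorem cseq_iInter_nonempty (φ : X → Y) (hφc : Continuous φ)
    (hφs : Function.Surjective φ) (e : ℕ → Set X) (he : ∀ n, IsOpen (e n)) (y : Y) :
    (⋂ n, Cseq φ e y n).Nonempty :=
  IsCompact.nonempty_iInter_of_sequence_nonempty_isCompact_isClosed _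
    (cseq_antitone φ e y) (cseq_nonempty φ hφs e y)
    ((cseq_closed φ hφc e he y 0).isCompact) (cseq_closed φ hφc e he y)

-- key Bos lemma
theorem cseq_bos (φ : X → Y) (hφc : Continuous φ) (e : ℕ → Set X)
    (he : ∀ n, IsOpen (e n)) :
    ∀ (n : ℕ) (U : Set X), IsOpen U → Bos Y {y | Cseq φ e y n ⊆ U} := by
  have hclosed : IsClosedMap φ := hφc.isClosedMap
  intro n
  induction n with
  | zero =>
    intro U hU
    have : {y | Cseq φ e y 0 ⊆ U} = (φ '' Uᶜ)ᶜ := by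
      ext y
      simp only [Cseq, mem_setOf_eq, mem_compl_iff, mem_image, not_exists]
      constructor
      · rintro h x ⟨hx, rfl⟩
        exact hx (h (by simp))
      · intro h x hx
        by_contra hxU
        exact h x ⟨hxU, by simpa using hx⟩
    rw [this]
    exact bos_open (hclosed _ hU.isClosed_compl).isOpen_compl
  | succ n ih =>
    intro U hU
    have heq : {y | Cseq φ e y (n+1) ⊆ U} =
        ({y | Cseq φ e y n ⊆ e n ∪ U} ∩ {y | Cseq φ e y n ⊆ e n}ᶜ) ∪
        ({y | Cseq φ e y n ⊆ e n} ∩ {y | Cseq φ e y n ⊆ U}) := by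
      ext y
      simp only [mem_union, mem_inter_iff, mem_compl_iff, mem_setOf_eq]
      by_cases h : (Cseq φ e y n \ e n).Nonempty
      · have h1 : Cseq φ e y (n+1) = Cseq φ e y n \ e n := by rw [Cseq, if_pos h]
        have h2 : ¬ Cseq φ e y n ⊆ e n := by
          obtain ⟨x, hx1, hx2⟩ := h
          exact fun hs => hx2 (hs hx1)
        rw [h1]
        constructor
        · intro hsub
          exact Or.inl ⟨fun x hx => by
            by_cases hxe : x ∈ e n
            · exact Or.inl hxe
            · exact Or.inr (hsub ⟨hx, hxe⟩), h2⟩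
        · rintro (⟨hsub, -⟩ | ⟨hsub, -⟩)
          · rintro x ⟨hx1, hx2⟩
            rcases hsub hx1 with h | h
            · exact absurd h hx2
            · exact h
          · exact absurd hsub h2
      · have h1 : Cseq φ e y (n+1) = Cseq φ e y n := by rw [Cseq, if_neg h]
        have h2 : Cseq φ e y n ⊆ e n := by
          intro x hx
          by_contra hxe
          exact h ⟨x, hx, hxe⟩
        rw [h1]
        constructor
        · intro hsub
          exact Or.inr ⟨h2, hsub⟩
        · rintro (⟨-, hne⟩ | ⟨-, hsub⟩)
          · exact absurd h2 hne
          · exact hsub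
    rw [heq]
    exact bos_union (bos_inter (ih _ ((he n).union hU)) (bos_compl (ih _ (he n))))
      (bos_inter (ih _ (he n)) (ih _ hU))


/-- the selection -/
noncomputable def psiSel (φ : X → Y) (hφc : Continuous φ) (hφs : Function.Surjective φ)
    (e : ℕ → Set X) (he : ∀ n, IsOpen (e n)) (y : Y) : X :=
  (cseq_iInter_nonempty φ hφc hφs e he y).some

theorem psiSel_mem (φ : X → Y) (hφc : Continuous φ) (hφs : Function.Surjective φ)
    (e : ℕ → Set X) (he : ∀ n, IsOpen (e n)) (y : Y) (n : ℕ) :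
    psiSel φ hφc hφs e he y ∈ Cseq φ e y n := by
  have := (cseq_iInter_nonempty φ hφc hφs e he y).some_mem
  exact mem_iInter.mp this n

theorem psiSel_section (φ : X → Y) (hφc : Continuous φ) (hφs : Function.Surjective φ)
    (e : ℕ → Set X) (he : ∀ n, IsOpen (e n)) (y : Y) :
    φ (psiSel φ hφc hφs e he y) = y := by
  have := psiSel_mem φ hφc hφs e he y 0
  simpa [Cseq] using this

theorem psiSel_preimage (φ : X → Y) (hφc : Continuous φ) (hφs : Function.Surjective φ)
    (e : ℕ → Set X) (he : ∀ n, IsOpen (e n)) (n : ℕ) :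
    psiSel φ hφc hφs e he ⁻¹' (e n) = {y | Cseq φ e y n ⊆ e n} := by
  ext y
  simp only [mem_preimage, mem_setOf_eq]
  constructor
  · intro h
    by_contra hsub
    have hne : (Cseq φ e y n \ e n).Nonempty := by
      rw [Set.sdiff_nonempty]; exact hsub
    have h1 : Cseq φ e y (n+1) = Cseq φ e y n \ e n := by rw [Cseq, if_pos hne]
    have := psiSel_mem φ hφc hφs e he y (n+1)
    rw [h1] at this
    exact this.2 h
  · intro h
    exact h (psiSel_mem φ hφc hφs e he y n)

/-- preimages of `AlgGen (· ∈ T)` sets under the selection are Bos -/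
theorem psiSel_bos (φ : X → Y) (hφc : Continuous φ) (hφs : Function.Surjective φ)
    (e : ℕ → Set X) (he : ∀ n, IsOpen (e n)) {T : Set (Set X)} (hTe : T ⊆ Set.range e)
    {s : Set X} (hs : AlgGen (· ∈ T) s) :
    Bos Y (psiSel φ hφc hφs e he ⁻¹' s) := by
  induction hs with
  | basic s hsT =>
    obtain ⟨n, rfl⟩ := hTe hsT
    rw [psiSel_preimage φ hφc hφs e he n]
    exact cseq_bos φ hφc e he n (e n) (he n)
  | empty => rw [Set.preimage_empty]; exact AlgGen.empty
  | compl s _ ih => simpa [Set.preimage_compl] using bos_compl ih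
  | union s t _ _ ih1 ih2 => simpa [Set.preimage_union] using bos_union ih1 ih2

/-- preservation of the hierarchy level under a map whose preimages of the generators
are Bos -/
theorem preimage_class {Z W : Type*} [TopologicalSpace W] (ψ : W → Z)
    (F : Set Z → Prop) (hbase : ∀ s, F s → Bos W (ψ ⁻¹' s)) (α : Ordinal.{0}) :
    (∀ s, SigmaClass F α s → SigmaClass (Bos W) α (ψ ⁻¹' s)) ∧
    (∀ s, PiClass F α s → PiClass (Bos W) α (ψ ⁻¹' s)) := by
  induction α using Ordinal.induction with
  | h α IH =>
    constructor
    · intro s hs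
      rw [sigmaClass_iff] at hs
      obtain ⟨g, hg, rfl⟩ := hs
      rw [Set.preimage_iUnion]
      refine (sigmaClass_iff _ _ _).mpr ⟨fun n => ψ ⁻¹' (g n), fun n => ?_, rfl⟩
      rcases hg n with h | ⟨β, h1, h2, h3⟩
      · exact Or.inl (hbase _ h)
      · exact Or.inr ⟨β, h1, h2, (IH β h2).2 _ h3⟩
    · intro s hs
      rw [piClass_iff] at hs
      obtain ⟨g, hg, rfl⟩ := hs
      rw [Set.preimage_iInter]
      refine (piClass_iff _ _ _).mpr ⟨fun n => ψ ⁻¹' (g n), fun n => ?_, rfl⟩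
      rcases hg n with h | ⟨β, h1, h2, h3⟩
      · exact Or.inl (hbase _ h)
      · exact Or.inr ⟨β, h1, h2, (IH β h2).1 _ h3⟩

end Selection

/-- Let `φ : X → Y` be a continuous surjection of compact Hausdorff
spaces and `f : X → ℝ` a bounded `Σ_α(Bos(X))`-measurable function for some countable
`α ≥ 2`. Then there is a section `ψ : Y → X` of `φ` such that `f ∘ ψ` is
`Σ_α(Bos(Y))`-measurable. -/
theorem statement16 {X Y : Type*} [TopologicalSpace X] [CompactSpace X] [T2Space X]
    [TopologicalSpace Y] [CompactSpace Y] [T2Space Y]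
    (φ : X → Y) (hφc : Continuous φ) (hφs : Function.Surjective φ)
    (f : X → ℝ) (hbdd : ∃ C : ℝ, ∀ x, |f x| ≤ C)
    (α : Ordinal.{0}) (hα2 : 2 ≤ α) (hα : α < omega1)
    (hf : SigmaClassMeasurable (Bos X) α f) :
    ∃ ψ : Y → X, (∀ y, φ (ψ y) = y) ∧ SigmaClassMeasurable (Bos Y) α (f ∘ ψ) := by
  classical
  -- countable generating families for the preimages of rational intervals
  have hext : ∀ p : ℚ × ℚ, ∃ T : Set (Set X), T.Countable ∧ (∀ u ∈ T, IsOpen u) ∧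
      SigmaClass (AlgGen (· ∈ T)) α (f ⁻¹' Ioo (p.1 : ℝ) (p.2 : ℝ)) := by
    intro p
    exact (class_extract α).1 _ (hf _ isOpen_Ioo)
  choose T hTc hTo hT using hext
  set T' : Set (Set X) := insert ∅ (⋃ p, T p) with hT'
  have hT'c : T'.Countable := (countable_iUnion hTc).insert ∅
  have hT'o : ∀ u ∈ T', IsOpen u := by
    rintro u (rfl | hu)
    · exact isOpen_empty
    · obtain ⟨p, hp⟩ := mem_iUnion.mp hu
      exact hTo p u hp
  obtain ⟨e, hee⟩ := hT'c.exists_eq_range ⟨∅, mem_insert _ _⟩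
  have he : ∀ n, IsOpen (e n) := fun n => hT'o (e n) (hee ▸ mem_range_self n)
  have hTe : T' ⊆ Set.range e := hee.le
  -- the selection
  refine ⟨psiSel φ hφc hφs e he, psiSel_section φ hφc hφs e he, ?_⟩
  set ψ := psiSel φ hφc hφs e he with hψ
  -- each rational-interval preimage is fine
  have hrat : ∀ p : ℚ × ℚ, SigmaClass (Bos Y) α (ψ ⁻¹' (f ⁻¹' Ioo (p.1:ℝ) (p.2:ℝ))) := by
    intro p
    have hmono : SigmaClass (AlgGen (· ∈ T')) α (f ⁻¹' Ioo (p.1:ℝ) (p.2:ℝ)) := by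
      refine (sigPi_mono (fun s hs => algGen_mono (fun u hu => ?_) hs) α).1 _ (hT p)
      exact mem_insert_of_mem _ (mem_iUnion.mpr ⟨p, hu⟩)
    exact (preimage_class ψ (AlgGen (· ∈ T'))
      (fun s hs => psiSel_bos φ hφc hφs e he hTe hs) α).1 _ hmono
  -- measurability
  intro U hU
  have hdecomp : (f ∘ ψ) ⁻¹' U =
      ⋃ p : ℚ × ℚ, if Ioo (p.1:ℝ) (p.2:ℝ) ⊆ U then ψ ⁻¹' (f ⁻¹' Ioo (p.1:ℝ) (p.2:ℝ))
        else (∅ : Set Y) := by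
    ext y
    simp only [mem_preimage, Function.comp_apply, mem_iUnion]
    constructor
    · intro hy
      obtain ⟨ε, hε, hball⟩ := Metric.isOpen_iff.mp hU _ hy
      obtain ⟨q, hq1, hq2⟩ := exists_rat_btwn (show f (ψ y) - ε < f (ψ y) by linarith)
      obtain ⟨r, hr1, hr2⟩ := exists_rat_btwn (show f (ψ y) < f (ψ y) + ε by linarith)
      have hsub : Ioo ((q:ℝ)) (r:ℝ) ⊆ U := by
        intro z hz
        apply hball
        rw [Real.ball_eq_Ioo]
        exact ⟨by linarith [hz.1], by linarith [hz.2]⟩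
      exact ⟨(q, r), by rw [if_pos hsub]; exact ⟨hq2, hr1⟩⟩
    · rintro ⟨p, hp⟩
      by_cases hsub : Ioo ((p.1:ℝ)) (p.2:ℝ) ⊆ U
      · rw [if_pos hsub] at hp
        exact hsub hp
      · rw [if_neg hsub] at hp
        exact absurd hp (notMem_empty y)
  rw [hdecomp]
  obtain ⟨en, hen⟩ := exists_surjective_nat (ℚ × ℚ)
  rw [← hen.iUnion_comp (fun p => if Ioo ((p.1:ℝ)) (p.2:ℝ) ⊆ U
      then ψ ⁻¹' (f ⁻¹' Ioo (p.1:ℝ) (p.2:ℝ)) else (∅ : Set Y))]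
  apply sigmaClass_iUnion
  intro n
  by_cases hsub : Ioo (((en n).1:ℝ)) ((en n).2:ℝ) ⊆ U
  · rw [if_pos hsub]; exact hrat (en n)
  · rw [if_neg hsub]; exact sigmaClass_of_F AlgGen.empty
end
end
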